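/- arXiv:2507.00148 — 7 statements merged into one kernel-verified Lean document; each statement's English description precedes it below -/
import Mathlib

section
/- For every n ≥ 1, the minimum number of leaves of a ternary decision tree computing the hazard-free extension of MUX_n, denoted size_u(MUX_n), satisfies 2·4^n ≤ size_u(MUX_n) ≤ 4^{n+1} − 3^n. -/
attribute [local instance 0] Classical.propDecidable

/-- Ternary values: `none` represents the uncertain value `u`,
`some b` represents the Boolean value `b`. -/
abbrev TVal := Option Bool

/-- The resolutions of `x ∈ {0,u,1}^ι`: all Boolean strings agreeing with
the determined coordinates of `x`. -/
def Res {ι : Type} (x : ι → Option Bool) : Set (ι → Bool) :=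
  {y | ∀ i b, x i = some b → y i = b}

/-- The hazard-free extension of a Boolean function `f`. -/
noncomputable def hfext {ι : Type} (f : (ι → Bool) → Bool) (x : ι → Option Bool) :
    Option Bool :=
  if ∀ y ∈ Res x, f y = true then some true
  else if ∀ y ∈ Res x, f y = false then some false
  else none

/-- Number of uncertain (`u`) coordinates of `x`. -/
noncomputable def uCount {ι : Type} [Fintype ι] (x : ι → Option Bool) : ℕ :=
  (Finset.univ.filter fun i : ι => x i = none).card

/-- u-sensitivity of `f` at `x`: the number of coordinates `i` such that
changing only coordinate `i` can change the value of the hazard-free extension. -/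
noncomputable def sensAt {ι : Type} [Fintype ι] (f : (ι → Bool) → Bool)
    (x : ι → Option Bool) : ℕ :=
  (Finset.univ.filter fun i : ι => ∃ y : ι → Option Bool,
      y i ≠ x i ∧ (∀ j, j ≠ i → y j = x j) ∧ hfext f y ≠ hfext f x).card

/-- u-sensitivity of `f`. -/
noncomputable def sensU {ι : Type} [Fintype ι] [DecidableEq ι]
    (f : (ι → Bool) → Bool) : ℕ :=
  Finset.univ.sup fun x : ι → Option Bool => sensAt f x

/-- u-sensitivity of `f` restricted to inputs whose hazard-free value is `b`. -/
noncomputable def sensULevel {ι : Type} [Fintype ι] [DecidableEq ι]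
    (f : (ι → Bool) → Bool) (b : Option Bool) : ℕ :=
  (Finset.univ.filter fun x : ι → Option Bool => hfext f x = b).sup (sensAt f)

/-- Boolean sensitivity of `f` at a Boolean input `x`. -/
noncomputable def boolSensAt {ι : Type} [Fintype ι] [DecidableEq ι]
    (f : (ι → Bool) → Bool) (x : ι → Bool) : ℕ :=
  (Finset.univ.filter fun i : ι => f (Function.update x i (!x i)) ≠ f x).card

/-- Boolean sensitivity of `f`. -/
noncomputable def boolSens {ι : Type} [Fintype ι] [DecidableEq ι]
    (f : (ι → Bool) → Bool) : ℕ :=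
  Finset.univ.sup (boolSensAt f)

/-- There are `k` pairwise disjoint blocks, each of which is sensitive for the
hazard-free extension of `f` at `x`. -/
def HasSensBlocks {ι : Type} (f : (ι → Bool) → Bool) (x : ι → Option Bool)
    (k : ℕ) : Prop :=
  ∃ (B : Fin k → Set ι) (y : Fin k → ι → Option Bool),
    (∀ j j', j ≠ j' → Disjoint (B j) (B j')) ∧
    ∀ j, (∀ i, y j i ≠ x i ↔ i ∈ B j) ∧ hfext f (y j) ≠ hfext f x

/-- u-block sensitivity of `f`. -/
noncomputable def bsU {ι : Type} (f : (ι → Bool) → Bool) : ℕ :=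
  sSup {k | ∃ x, HasSensBlocks f x k}

/-- A ternary string `y` is consistent with a partial assignment
`p : ι → Option (Option Bool)` (`none` = `*`). -/
def Consistent {ι : Type} (y : ι → Option Bool) (p : ι → Option (Option Bool)) :
    Prop :=
  ∀ i v, p i = some v → y i = v

/-- `p` is a certificate for the hazard-free extension of `f` at `x`. -/
def IsCert {ι : Type} (f : (ι → Bool) → Bool) (x : ι → Option Bool)
    (p : ι → Option (Option Bool)) : Prop :=
  Consistent x p ∧ ∀ y, Consistent y p → hfext f y = hfext f x

/-- Size of a partial assignment: the number of non-`*` coordinates. -/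
noncomputable def certSize {ι : Type} [Fintype ι] (p : ι → Option (Option Bool)) :
    ℕ :=
  (Finset.univ.filter fun i : ι => p i ≠ none).card

/-- u-certificate complexity of `f` at `x`. -/
noncomputable def ccAt {ι : Type} [Fintype ι] (f : (ι → Bool) → Bool)
    (x : ι → Option Bool) : ℕ :=
  sInf {k | ∃ p, IsCert f x p ∧ certSize p = k}

/-- u-certificate complexity of `f`. -/
noncomputable def ccU {ι : Type} [Fintype ι] [DecidableEq ι]
    (f : (ι → Bool) → Bool) : ℕ :=
  Finset.univ.sup fun x : ι → Option Bool => ccAt f x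

/-- u-certificate complexity of `f` restricted to inputs with hazard-free value `b`. -/
noncomputable def ccULevel {ι : Type} [Fintype ι] [DecidableEq ι]
    (f : (ι → Bool) → Bool) (b : Option Bool) : ℕ :=
  (Finset.univ.filter fun x : ι → Option Bool => hfext f x = b).sup (ccAt f)

/-- A set of literals (at most one per variable), encoded as a partial Boolean
assignment `q : ι → Option Bool`, is an implicant of `f` if `f` is `true` on
every Boolean input extending `q`. -/
def IsImplicant {ι : Type} (f : (ι → Bool) → Bool) (q : ι → Option Bool) : Prop :=
  ∀ y : ι → Bool, (∀ i b, q i = some b → y i = b) → f y = true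

/-- Dually, an implicate of `f` forces the value `false`. -/
def IsImplicate {ι : Type} (f : (ι → Bool) → Bool) (q : ι → Option Bool) : Prop :=
  ∀ y : ι → Bool, (∀ i b, q i = some b → y i = b) → f y = false

/-- `q'` is a (literal-)subset of `q`. -/
def SubAsn {ι : Type} (q' q : ι → Option Bool) : Prop :=
  ∀ i b, q' i = some b → q i = some b

def IsPrimeImplicant {ι : Type} (f : (ι → Bool) → Bool) (q : ι → Option Bool) :
    Prop :=
  IsImplicant f q ∧ ∀ q', SubAsn q' q → q' ≠ q → ¬ IsImplicant f q'

def IsPrimeImplicate {ι : Type} (f : (ι → Bool) → Bool) (q : ι → Option Bool) :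
    Prop :=
  IsImplicate f q ∧ ∀ q', SubAsn q' q → q' ≠ q → ¬ IsImplicate f q'

/-- Number of literals of a partial assignment. -/
noncomputable def asnSize {ι : Type} [Fintype ι] (q : ι → Option Bool) : ℕ :=
  (Finset.univ.filter fun i : ι => q i ≠ none).card

/-- Ternary decision trees: internal nodes query a variable and branch on the
three possible values `0`, `u`, `1`; leaves output a value in `{0,u,1}`. -/
inductive TTree (ι : Type) : Type where
  | leaf : Option Bool → TTree ι
  | node : ι → TTree ι → TTree ι → TTree ι → TTree ι

namespace TTree

def eval {ι : Type} : TTree ι → (ι → Option Bool) → Option Bool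
  | .leaf b, _ => b
  | .node i t0 tu t1, x =>
    match x i with
    | some false => eval t0 x
    | none => eval tu x
    | some true => eval t1 x

def depth {ι : Type} : TTree ι → ℕ
  | .leaf _ => 0
  | .node _ t0 tu t1 => max (max t0.depth tu.depth) t1.depth + 1

/-- Size of a tree: its number of leaves. -/
def size {ι : Type} : TTree ι → ℕ
  | .leaf _ => 1
  | .node _ t0 tu t1 => t0.size + tu.size + t1.size

end TTree

/-- Boolean decision trees. -/
inductive BTree (ι : Type) : Type where
  | leaf : Bool → BTree ι
  | node : ι → BTree ι → BTree ι → BTree ι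

namespace BTree

def eval {ι : Type} : BTree ι → (ι → Bool) → Bool
  | .leaf b, _ => b
  | .node i t0 t1, x => if x i then eval t1 x else eval t0 x

def depth {ι : Type} : BTree ι → ℕ
  | .leaf _ => 0
  | .node _ t0 t1 => max t0.depth t1.depth + 1

/-- Size of a tree: its number of leaves. -/
def size {ι : Type} : BTree ι → ℕ
  | .leaf _ => 1
  | .node _ t0 t1 => t0.size + t1.size

end BTree

/-- Deterministic u-query complexity: minimal depth of a ternary decision tree
computing the hazard-free extension of `f`. -/
noncomputable def Du {ι : Type} (f : (ι → Bool) → Bool) : ℕ :=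
  sInf {d | ∃ T : TTree ι, (∀ x, T.eval x = hfext f x) ∧ T.depth = d}

/-- Minimal number of leaves of a ternary decision tree computing the
hazard-free extension of `f`. -/
noncomputable def sizeU {ι : Type} (f : (ι → Bool) → Bool) : ℕ :=
  sInf {s | ∃ T : TTree ι, (∀ x, T.eval x = hfext f x) ∧ T.size = s}

/-- Deterministic (Boolean) query complexity of `f`. -/
noncomputable def Dbool {ι : Type} (f : (ι → Bool) → Bool) : ℕ :=
  sInf {d | ∃ T : BTree ι, (∀ x, T.eval x = f x) ∧ T.depth = d}

/-- Minimal number of leaves of a Boolean decision tree computing `f`. -/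
noncomputable def sizeBool {ι : Type} (f : (ι → Bool) → Bool) : ℕ :=
  sInf {s | ∃ T : BTree ι, (∀ x, T.eval x = f x) ∧ T.size = s}

/-- Index type for `MUX_n`: `n` selector bits and `2^n` data bits. -/
abbrev MUXIdx (n : ℕ) := Fin n ⊕ (Fin n → Bool)

/-- The multiplexer function: output the data bit addressed by the selector bits. -/
def MUX (n : ℕ) (z : MUXIdx n → Bool) : Bool :=
  z (Sum.inr fun i => z (Sum.inl i))

/-!
Upper bound: query the first selector bit. On an answer `0` or `1` what remains is a multiplexer
with one selector bit fewer; on `u` it is again such a multiplexer, except that every address now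
carries two data cells, whose values must all agree. With `k` data cells per address, the
recursion `L(n+1, k) = 2 L(n, k) + L(n, 2k)`, `L(0, k) = 4k - 1` (check `k` cells for agreement),
gives `L(n, k) ≤ 4k·4^n - 3^n`.

Lower bound: a fooling set. For a ternary selector `s`, a resolution `a` of `s` and a bit `b`, let
the data be `b` on the subcube `Res s` except at `a`, which holds `u` if `b` and `1` otherwise, and
`0` outside `Res s`. Two different such inputs span a subcube on which the hazard-free multiplexer
is not constant, so they reach different leaves; and there are `2·4^n` of them.
-/

theorem hfext_eq_some_iff {ι : Type} (f : (ι → Bool) → Bool) (x : ι → Option Bool) (v : Bool) :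
    hfext f x = some v ↔ ∀ y ∈ Res x, f y = v := by
  have hres : (fun i => (x i).getD false) ∈ Res x := fun i b hb => by simp [hb]
  unfold hfext
  split_ifs with htrue hfalse <;> cases v <;> simp_all
  exact ⟨_, hres⟩

theorem cons_mem_res_iff {n : ℕ} {y : Fin (n + 1) → Option Bool} {b : Bool}
    {r : Fin n → Bool} :
    Fin.cons b r ∈ Res y ↔ (∀ c, y 0 = some c → b = c) ∧ r ∈ Res (Fin.tail y) := by
  simp only [Res, Set.mem_ofPred_eq, Fin.forall_fin_succ, Fin.cons_zero, Fin.cons_succ, Fin.tail]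

theorem forall_mem_res_succ_iff {n : ℕ} {y : Fin (n + 1) → Option Bool}
    {P : (Fin (n + 1) → Bool) → Prop} :
    (∀ r ∈ Res y, P r) ↔
      ∀ b, (∀ c, y 0 = some c → b = c) → ∀ r ∈ Res (Fin.tail y), P (Fin.cons b r) := by
  simp only [Fin.forall_fin_succ_pi, cons_mem_res_iff, and_imp]
  exact forall_congr' fun b => ⟨fun h hb r => h r hb, fun h r hb => h hb r⟩

theorem sizeU_le {ι : Type} {f : (ι → Bool) → Bool} (T : TTree ι)
    (hT : ∀ x, T.eval x = hfext f x) : sizeU f ≤ T.size :=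
  Nat.sInf_le ⟨T, hT, rfl⟩

theorem le_sizeU {ι : Type} {f : (ι → Bool) → Bool} {k : ℕ}
    (hf : ∃ T : TTree ι, ∀ x, T.eval x = hfext f x)
    (hk : ∀ T : TTree ι, (∀ x, T.eval x = hfext f x) → k ≤ T.size) : k ≤ sizeU f := by
  obtain ⟨T, hT⟩ := hf
  exact le_csInf ⟨_, T, hT, rfl⟩ fun _ ⟨T', hT', hsize⟩ => hsize ▸ hk T' hT'

section FoolingPairs

variable {ι : Type} {g : (ι → Option Bool) → Option Bool} {x x' : ι → Option Bool}

def IsFoolingPair (g : (ι → Option Bool) → Option Bool) (x x' : ι → Option Bool) : Prop :=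
  ∃ y z : ι → Option Bool, (∀ i, x i = x' i → y i = x i ∧ z i = x i) ∧ g y ≠ g z

theorem IsFoolingPair.symm (h : IsFoolingPair g x x') : IsFoolingPair g x' x := by
  obtain ⟨y, z, hyz, hne⟩ := h
  refine ⟨y, z, fun i hi => ?_, hne⟩
  obtain ⟨hy, hz⟩ := hyz i hi.symm
  exact ⟨hy.trans hi.symm, hz.trans hi.symm⟩

theorem IsFoolingPair.ne (h : IsFoolingPair g x x') : x ≠ x' := by
  rintro rfl
  obtain ⟨y, z, hyz, hne⟩ := h
  exact hne (by rw [funext fun i => (hyz i rfl).1, funext fun i => (hyz i rfl).2])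

theorem isFoolingPair_of_agree (y : ι → Option Bool) (hy : ∀ i, x i = x' i → y i = x i)
    (hne : g y ≠ g x) : IsFoolingPair g x x' :=
  ⟨y, x, fun i hi => ⟨hy i hi, rfl⟩, hne⟩

end FoolingPairs

namespace TTree

variable {ι : Type}

/-- Two inputs of a fooling pair cannot reach the same leaf. -/
theorem card_le_size (t : TTree ι) {S : Finset (ι → Option Bool)}
    (hS : (S : Set (ι → Option Bool)).Pairwise (IsFoolingPair t.eval)) : S.card ≤ t.size := by
  induction t generalizing S with
  | leaf b =>
    refine Finset.card_le_one.2 fun x hx x' hx' => by_contra fun hne => ?_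
    obtain ⟨y, z, -, hyz⟩ := hS hx hx' hne
    exact hyz rfl
  | node i t0 tu t1 ih0 ihu ih1 =>
    have child : ∀ (v : Option Bool) (t : TTree ι),
        (∀ y, y i = v → (node i t0 tu t1).eval y = t.eval y) →
        ((S.filter (· i = v) : Finset _) : Set (ι → Option Bool)).Pairwise
          (IsFoolingPair t.eval) := by
      intro v t heval x hx x' hx' hne
      simp only [Finset.mem_coe, Finset.mem_filter] at hx hx'
      obtain ⟨y, z, hyz, hne⟩ := hS hx.1 hx'.1 hne
      obtain ⟨hy, hz⟩ := hyz i (hx.2.trans hx'.2.symm)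
      refine ⟨y, z, hyz, ?_⟩
      rwa [← heval y (hy.trans hx.2), ← heval z (hz.trans hx.2)]
    calc S.card = ∑ v, (S.filter (· i = v)).card :=
          Finset.card_eq_sum_card_fiberwise fun _ _ => Finset.mem_univ _
      _ = (S.filter (· i = some false)).card + (S.filter (· i = none)).card
            + (S.filter (· i = some true)).card := by
          simp only [Fintype.sum_option, Fintype.sum_bool]; ring
      _ ≤ t0.size + tu.size + t1.size := by
          gcongr
          · exact ih0 (child _ _ fun y hy => by simp only [eval, hy])
          · exact ihu (child _ _ fun y hy => by simp only [eval, hy])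
          · exact ih1 (child _ _ fun y hy => by simp only [eval, hy])
      _ = (node i t0 tu t1).size := rfl

def checkConst (v : Bool) : List ι → TTree ι
  | [] => leaf (some v)
  | i :: L =>
    node i (bif v then leaf none else checkConst v L) (leaf none)
      (bif v then checkConst v L else leaf none)

theorem eval_checkConst_eq_some_iff (v w : Bool) (L : List ι) (x : ι → Option Bool) :
    (checkConst v L).eval x = some w ↔ w = v ∧ ∀ i ∈ L, x i = some v := by
  induction L with
  | nil => simp [checkConst, eval, eq_comm]
  | cons i L ih =>
    rcases hi : x i with _ | c
    · simp [checkConst, eval, hi]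
    · cases v <;> cases c <;> simp [checkConst, eval, hi, ih]

theorem size_checkConst (v : Bool) (L : List ι) : (checkConst v L).size = 2 * L.length + 1 := by
  induction L with
  | nil => rfl
  | cons i L ih => cases v <;> simp only [checkConst, size, cond, ih, List.length_cons] <;> ring

def consensus (i : ι) (L : List ι) : TTree ι :=
  node i (checkConst false L) (leaf none) (checkConst true L)

theorem eval_consensus_eq_some_iff (i : ι) (L : List ι) (x : ι → Option Bool) (v : Bool) :
    (consensus i L).eval x = some v ↔ ∀ j ∈ i :: L, x j = some v := by
  rcases hi : x i with _ | c
  · simp [consensus, eval, hi]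
  · cases c <;> cases v <;> simp [consensus, eval, hi, eval_checkConst_eq_some_iff]

theorem size_consensus (i : ι) (L : List ι) : (consensus i L).size = 4 * L.length + 3 := by
  simp only [consensus, size, size_checkConst]; ring

theorem exists_eval_eq_some_iff_forall_cells (n : ℕ) (sel : Fin n → ι)
    (cells : List ((Fin n → Bool) → ι)) (hcells : cells ≠ []) :
    ∃ T : TTree ι, (∀ x v, T.eval x = some v ↔
        ∀ c ∈ cells, ∀ r ∈ Res (x ∘ sel), x (c r) = some v) ∧
      T.size + 3 ^ n ≤ 4 * cells.length * 4 ^ n := by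
  induction n with
  | zero =>
    obtain _ | ⟨c, cs⟩ := cells
    · exact absurd rfl hcells
    refine ⟨consensus (c ![]) (cs.map (· ![])), fun x v => ?_, ?_⟩
    · simp [eval_consensus_eq_some_iff, Fin.forall_fin_zero_pi, Res]
    · simp only [size_consensus, List.length_map, List.length_cons]; ring_nf; omega
  | succ n ih =>
    let cellsAt (b : Bool) := cells.map fun c r => c (Fin.cons b r)
    obtain ⟨T0, hT0, hs0⟩ := ih (Fin.tail sel) (cellsAt false) (by simpa [cellsAt] using hcells)
    obtain ⟨T1, hT1, hs1⟩ := ih (Fin.tail sel) (cellsAt true) (by simpa [cellsAt] using hcells)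
    obtain ⟨Tu, hTu, hsu⟩ :=
      ih (Fin.tail sel) (cellsAt false ++ cellsAt true) (by simp [cellsAt, hcells])
    refine ⟨node (sel 0) T0 Tu T1, fun x v => ?_, ?_⟩
    · have key := fun c : (Fin (n + 1) → Bool) → ι =>
        forall_mem_res_succ_iff (y := x ∘ sel) (P := fun r => x (c r) = some v)
      rcases h : x (sel 0) with _ | b
      · simp only [eval, h, hTu, cellsAt, List.forall_mem_append, List.forall_mem_map, key]
        simp [h, Fin.comp_tail, Bool.forall_bool, imp_and, forall_and]
      · cases b
        · simp [eval, h, hT0, cellsAt, Fin.comp_tail, key]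
        · simp [eval, h, hT1, cellsAt, Fin.comp_tail, key]
    · simp only [size, List.length_append, List.length_map, cellsAt] at hs0 hs1 hsu ⊢
      rw [pow_succ, pow_succ]
      nlinarith

end TTree

namespace MUX

variable {n : ℕ} {s t : Fin n → Option Bool} {a a' : Fin n → Bool} {b c : Bool}

theorem forall_res_eq_iff (x : MUXIdx n → Option Bool) (v : Bool) :
    (∀ y ∈ Res x, MUX n y = v) ↔ ∀ r ∈ Res (x ∘ Sum.inl), x (.inr r) = some v := by
  constructor
  · intro h r hr
    by_contra hne
    have hy : Sum.elim r (fun w => if w = r then !v else (x (.inr w)).getD false) ∈ Res x := by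
      rintro (i | w) c hc
      · exact hr i c hc
      · by_cases hw : w = r
        · subst hw
          cases v <;> cases c <;> simp_all
        · simp [hw, hc]
    simpa [MUX] using h _ hy
  · intro h y hy
    have hsel : (fun i => y (.inl i)) ∈ Res (x ∘ Sum.inl) := fun i c hc => hy (.inl i) c hc
    exact hy _ v (h _ hsel)

theorem hfext_eq_some_iff (x : MUXIdx n → Option Bool) (v : Bool) :
    hfext (MUX n) x = some v ↔ ∀ r ∈ Res (x ∘ Sum.inl), x (.inr r) = some v :=
  (_root_.hfext_eq_some_iff _ x v).trans (forall_res_eq_iff x v)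

variable (n) in
theorem exists_tree : ∃ T : TTree (MUXIdx n),
    (∀ x, T.eval x = hfext (MUX n) x) ∧ T.size + 3 ^ n ≤ 4 ^ (n + 1) := by
  obtain ⟨T, hT, hsize⟩ :=
    TTree.exists_eval_eq_some_iff_forall_cells n Sum.inl [Sum.inr] (List.cons_ne_nil _ _)
  refine ⟨T, fun x => Option.ext fun v => ?_, by simpa [pow_succ, mul_comm] using hsize⟩
  simp only [hT, hfext_eq_some_iff, List.forall_mem_singleton]

noncomputable def foolingInput (s : Fin n → Option Bool) (a : Fin n → Bool) (b : Bool) :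
    MUXIdx n → Option Bool
  | .inl i => s i
  | .inr w => if w ∈ Res s then (if w = a then (if b then none else some true) else some b)
      else some false

theorem hfext_foolingInput_ne (ha : a ∈ Res s) (b : Bool) :
    hfext (MUX n) (foolingInput s a b) ≠ some b := by
  intro h
  have := (hfext_eq_some_iff _ b).1 h a ha
  cases b <;> simp [foolingInput, ha] at this

theorem isFoolingPair_of_selector (x x' : MUXIdx n → Option Bool) (p : Fin n → Option Bool)
    (v : Bool) (hp : ∀ i, x (.inl i) = x' (.inl i) → p i = x (.inl i))
    (hv : ∀ r ∈ Res p, x (.inr r) = x' (.inr r) → x (.inr r) = some v)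
    (hx : hfext (MUX n) x ≠ some v) : IsFoolingPair (hfext (MUX n)) x x' := by
  let y : MUXIdx n → Option Bool :=
    Sum.elim p fun w => if x (.inr w) = x' (.inr w) then x (.inr w) else some v
  have hy : hfext (MUX n) y = some v := by
    rw [hfext_eq_some_iff]
    intro r hr
    simp only [y, Sum.elim_inr]
    split_ifs with h
    exacts [hv r hr h, rfl]
  refine isFoolingPair_of_agree y ?_ (hy ▸ Ne.symm hx)
  rintro (i | w) h
  · exact hp i h
  · simp [y, h]

theorem isFoolingPair_foolingInput_of_inr_ne (ha : a ∈ Res s) (x' : MUXIdx n → Option Bool)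
    (h : foolingInput s a b (.inr a) ≠ x' (.inr a)) :
    IsFoolingPair (hfext (MUX n)) (foolingInput s a b) x' := by
  refine isFoolingPair_of_selector _ _ s b (fun _ _ => rfl) (fun r hr hrr => ?_)
    (hfext_foolingInput_ne ha b)
  have hra : r ≠ a := by rintro rfl; exact h hrr
  simp [foolingInput, hr, hra]

theorem isFoolingPair_foolingInput_of_sel_ne (hs : a ∈ Res s) (ht : a ∈ Res t) {i : Fin n}
    (hi : s i ≠ t i) (hti : t i = none) :
    IsFoolingPair (hfext (MUX n)) (foolingInput s a b) (foolingInput t a b) := by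
  refine isFoolingPair_of_selector _ _ (Function.update t i (some (!a i))) b
    (fun j hj => ?_) (fun r hr hrr => ?_) (hfext_foolingInput_ne hs b)
  · have hji : j ≠ i := by rintro rfl; exact hi hj
    simp only [foolingInput] at hj ⊢
    rw [Function.update_of_ne hji, hj]
  · have hri : r i = !a i := hr i _ (by simp)
    have hrs : r ∉ Res s := by
      intro hrs
      obtain ⟨d, hd⟩ := Option.ne_none_iff_exists'.1 (hti ▸ hi)
      rw [hrs i d hd, ← hs i d hd] at hri
      simp at hri
    have hrt : r ∈ Res t := by
      intro j d hd
      have hji : j ≠ i := by rintro rfl; simp [hti] at hd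
      exact hr j d (by rwa [Function.update_of_ne hji])
    have hra : r ≠ a := by rintro rfl; simp at hri
    rw [hrr]
    simp [foolingInput, hrt, hra]

theorem eq_of_foolingInput_inr_eq (hs : a ∈ Res s) (ht : a' ∈ Res t)
    (h : foolingInput s a b (.inr a) = foolingInput t a' c (.inr a))
    (h' : foolingInput t a' c (.inr a') = foolingInput s a b (.inr a')) :
    a = a' ∧ b = c ∧ a ∈ Res t := by
  by_cases hat : a ∈ Res t
  swap
  · cases b <;> simp [foolingInput, hs, hat] at h
  by_cases ha's : a' ∈ Res s
  swap
  · cases c <;> simp [foolingInput, ht, ha's] at h'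
  by_cases haa : a = a'
  · subst haa
    cases b <;> cases c <;> simp_all [foolingInput]
  · have ha'a : a' ≠ a := Ne.symm haa
    cases b <;> cases c <;> simp_all [foolingInput]

theorem isFoolingPair_foolingInput (hs : a ∈ Res s) (ht : a' ∈ Res t)
    (hne : (s, a, b) ≠ (t, a', c)) :
    IsFoolingPair (hfext (MUX n)) (foolingInput s a b) (foolingInput t a' c) := by
  by_cases h : foolingInput s a b (.inr a) = foolingInput t a' c (.inr a)
  swap
  · exact isFoolingPair_foolingInput_of_inr_ne hs _ h
  by_cases h' : foolingInput t a' c (.inr a') = foolingInput s a b (.inr a')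
  swap
  · exact (isFoolingPair_foolingInput_of_inr_ne ht _ h').symm
  obtain ⟨rfl, rfl, hat⟩ := eq_of_foolingInput_inr_eq hs ht h h'
  obtain ⟨i, hi⟩ := Function.ne_iff.1 fun hst : s = t => hne (hst ▸ rfl)
  -- `s i` and `t i` are distinct and both compatible with `a i`, so one of them is `u`
  rcases hsi : s i with _ | d
  · exact (isFoolingPair_foolingInput_of_sel_ne ht hs (Ne.symm hi) hsi).symm
  · rcases hti : t i with _ | e
    · exact isFoolingPair_foolingInput_of_sel_ne hs ht hi hti
    · exact absurd (by rw [hsi, hti, ← hs i d hsi, ht i e hti]) hi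

def maskedSel (a m : Fin n → Bool) : Fin n → Option Bool :=
  fun i => if m i then none else some (a i)

theorem mem_res_maskedSel (a m : Fin n → Bool) : a ∈ Res (maskedSel a m) := by
  intro i d hd
  by_cases hm : m i <;> simp_all [maskedSel]

theorem maskedSel_injective (a : Fin n → Bool) : Function.Injective (maskedSel a) := by
  intro m m' h
  funext i
  have := congrFun h i
  cases hm : m i <;> cases hm' : m' i <;> simp_all [maskedSel]

theorem two_mul_four_pow_le_size (T : TTree (MUXIdx n)) (hT : ∀ x, T.eval x = hfext (MUX n) x) :
    2 * 4 ^ n ≤ T.size := by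
  let F : (Fin n → Bool) × (Fin n → Bool) × Bool → MUXIdx n → Option Bool :=
    fun q => foolingInput (maskedSel q.1 q.2.1) q.1 q.2.2
  have hfool : ∀ q q', q ≠ q' → IsFoolingPair (hfext (MUX n)) (F q) (F q') := by
    rintro ⟨a, m, b⟩ ⟨a', m', c⟩ hne
    refine isFoolingPair_foolingInput (mem_res_maskedSel a m) (mem_res_maskedSel a' m') ?_
    intro h
    simp only [Prod.mk.injEq] at h
    obtain ⟨hsel, rfl, rfl⟩ := h
    exact hne (by rw [maskedSel_injective a hsel])
  have hinj : F.Injective := fun q q' h => by_contra fun hne => (hfool q q' hne).ne h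
  calc 2 * 4 ^ n = (Finset.univ.image F).card := by
        rw [Finset.card_image_of_injective _ hinj, Finset.card_univ]
        simp only [Fintype.card_prod, Fintype.card_fun, Fintype.card_bool, Fintype.card_fin]
        rw [show (4 : ℕ) = 2 * 2 from rfl, mul_pow]
        ring
    _ ≤ T.size := by
        refine T.card_le_size ?_
        rw [funext hT, Finset.coe_image]
        rintro _ ⟨q, -, rfl⟩ _ ⟨q', -, rfl⟩ hne
        exact hfool q q' fun h => hne (h ▸ rfl)

end MUX

theorem stmt12_general (n : ℕ) :
    2 * 4^n ≤ sizeU (MUX n) ∧ sizeU (MUX n) ≤ 4^(n+1) - 3^n := by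
  obtain ⟨T, hT, hsize⟩ := MUX.exists_tree n
  refine ⟨le_sizeU ⟨T, hT⟩ MUX.two_mul_four_pow_le_size, ?_⟩
  have := sizeU_le T hT
  omega

/-- `2·4^n ≤ size_u(MUX_n) ≤ 4^{n+1} − 3^n`. -/
theorem stmt12 (n : ℕ) (hn : 1 ≤ n) :
    2 * 4^n ≤ sizeU (MUX n) ∧ sizeU (MUX n) ≤ 4^(n+1) - 3^n :=
  stmt12_general n
end

section
/- For every n ≥ 1, the minimum number of leaves of a ternary decision tree computing the hazard-free extension of AND_n (the n-bit conjunction) equals exactly 2^{n+1} − 1. -/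
attribute [local instance 0] Classical.propDecidable

/-!
Upper bound: query the variables one after another, answering `0` as soon as a `0` is read.
After a `u` the output can only be `0` or `u`, so on the remaining `k` variables only a `0`
has to be detected, with `2^(k+1) - 1` leaves. The leaf count satisfies
`s(n) = 1 + (2^n - 1) + s(n-1)`, so `s(n) = 2^(n+1) - 1`.

Lower bound: suppose that on the subcube of inputs agreeing with `c` off `S`, a tree outputs a
fixed value `o` exactly when some variable of `S` is `0`. A leaf cannot do this unless `S = ∅`;
a query outside `S` just follows the fixed value; after a query of `i ∈ S` both the `u`- and the
`1`-child face the same task for `S \ {i}`. Hence the tree has at least `2^(|S|+1) - 1` leaves,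
and `hfext AND` poses this task with `S` the full index set and `o = 0`.
-/

open Finset

section Res

variable {ι : Type} {f : (ι → Bool) → Bool} (hf : ∀ y, f y = true ↔ ∀ i, y i = true)
  (x : ι → Option Bool)
include hf

theorem forall_res_eq_true_iff_of_and :
    (∀ y ∈ Res x, f y = true) ↔ ∀ i, x i = some true := by
  refine ⟨fun h i => ?_, fun h y hy => (hf y).2 fun i => hy i true (h i)⟩
  have := (hf _).1 (h (fun j => (x j).getD false) fun j b hb => by simp [hb]) i
  cases hxi : x i <;> simp_all

theorem forall_res_eq_false_iff_of_and :
    (∀ y ∈ Res x, f y = false) ↔ ∃ i, x i = some false := by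
  have hf' (y : ι → Bool) : f y = false ↔ ∃ i, y i = false := by
    rw [← Bool.not_eq_true, hf, not_forall]
    simp
  refine ⟨fun h => ?_, fun ⟨i, hi⟩ y hy => (hf' y).2 ⟨i, hy i false hi⟩⟩
  obtain ⟨i, hi⟩ := (hf' _).1 (h (fun j => (x j).getD true) fun j b hb => by simp [hb])
  refine ⟨i, ?_⟩
  cases hxi : x i <;> simp_all

theorem hfext_of_and :
    hfext f x = if ∀ i, x i = some true then some true
      else if ∃ i, x i = some false then some false else none := by
  rw [hfext, forall_res_eq_true_iff_of_and hf, forall_res_eq_false_iff_of_and hf]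

end Res

namespace TTree

variable {ι : Type}

theorem size_pos (T : TTree ι) : 0 < T.size := by
  induction T with
  | leaf => simp [size]
  | node _ _ _ _ _ _ _ => simp only [size]; omega

def FlagsZeroOn (T : TTree ι) (o : Option Bool) (S : Finset ι) (c : ι → Option Bool) :
    Prop :=
  ∀ x, (∀ i ∉ S, x i = c i) → (T.eval x = o ↔ ∃ i ∈ S, x i = some false)

theorem FlagsZeroOn.eq_empty {v o : Option Bool} {S : Finset ι} {c : ι → Option Bool}
    (h : (leaf v).FlagsZeroOn o S c) : S = ∅ := by
  by_contra hS
  obtain ⟨i, hi⟩ := nonempty_iff_ne_empty.2 hS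
  have hv : v = o := (h (fun j => if j ∈ S then some false else c j) (by simp +contextual)).2
    ⟨i, hi, by simp [hi]⟩
  obtain ⟨j, hj, hfj⟩ := (h (fun j => if j ∈ S then some true else c j) (by simp +contextual)).1 hv
  simp [hj] at hfj

theorem FlagsZeroOn.child {i : ι} {t0 tu t1 : TTree ι} {o : Option Bool} {S : Finset ι}
    {c : ι → Option Bool} (h : (node i t0 tu t1).FlagsZeroOn o S c) (hi : i ∈ S) :
    t1.FlagsZeroOn o (S.erase i) (Function.update c i (some true)) ∧
      tu.FlagsZeroOn o (S.erase i) (Function.update c i none) := by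
  have restrict : ∀ w ≠ some false, ∀ x, (∀ j ∉ S.erase i, x j = Function.update c i w j) →
      x i = w ∧ ((node i t0 tu t1).eval x = o ↔ ∃ j ∈ S.erase i, x j = some false) := by
    intro w hw x hx
    have hxi : x i = w := by simpa using hx i (by simp)
    refine ⟨hxi, ?_⟩
    rw [h x fun j hj => by simpa [(ne_of_mem_of_not_mem hi hj).symm] using hx j (by simp [hj])]
    grind
  constructor <;> intro x hx
  · obtain ⟨hxi, hx⟩ := restrict (some true) (by simp) x hx
    simpa [eval, hxi] using hx
  · obtain ⟨hxi, hx⟩ := restrict none (by simp) x hx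
    simpa [eval, hxi] using hx

theorem FlagsZeroOn.two_pow_card_le {T : TTree ι} {o : Option Bool} {S : Finset ι}
    {c : ι → Option Bool} (h : T.FlagsZeroOn o S c) : 2 ^ (#S + 1) ≤ T.size + 1 := by
  induction T generalizing S c with
  | leaf v => simp [h.eq_empty, size]
  | node i t0 tu t1 ih0 ihu ih1 =>
    have := t0.size_pos
    have := tu.size_pos
    have := t1.size_pos
    simp only [size]
    by_cases hi : i ∈ S
    · obtain ⟨h1, hu⟩ := h.child hi
      have := ih1 h1
      have := ihu hu
      rw [← card_erase_add_one hi, pow_succ]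
      omega
    · have hxi : ∀ x : ι → Option Bool, (∀ j ∉ S, x j = c j) → x i = c i := fun x hx => hx i hi
      rcases hc : c i with _ | _ | _
      · have := ihu fun x hx => by simpa [eval, hxi x hx, hc] using h x hx
        omega
      · have := ih0 fun x hx => by simpa [eval, hxi x hx, hc] using h x hx
        omega
      · have := ih1 fun x hx => by simpa [eval, hxi x hx, hc] using h x hx
        omega

def anyZero : List ι → TTree ι
  | [] => leaf none
  | i :: l => node i (leaf (some false)) (anyZero l) (anyZero l)

def kleeneAnd : List ι → TTree ι
  | [] => leaf (some true)
  | i :: l => node i (leaf (some false)) (anyZero l) (kleeneAnd l)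

theorem size_anyZero (l : List ι) : (anyZero l).size + 1 = 2 ^ (l.length + 1) := by
  induction l with
  | nil => rfl
  | cons i l ih => simp only [anyZero, size, List.length_cons, pow_succ 2 (l.length + 1)]; omega

theorem size_kleeneAnd (l : List ι) : (kleeneAnd l).size + 1 = 2 ^ (l.length + 1) := by
  induction l with
  | nil => rfl
  | cons i l ih =>
    have := size_anyZero l
    simp only [kleeneAnd, size, List.length_cons, pow_succ 2 (l.length + 1)]; omega

theorem eval_anyZero (l : List ι) (x : ι → Option Bool) :
    (anyZero l).eval x = if ∃ i ∈ l, x i = some false then some false else none := by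
  induction l with
  | nil => simp [anyZero, eval]
  | cons i l ih => rcases hxi : x i with _ | _ | _ <;> simp [anyZero, eval, hxi, ih]

theorem eval_kleeneAnd (l : List ι) (x : ι → Option Bool) :
    (kleeneAnd l).eval x = if ∀ i ∈ l, x i = some true then some true
      else if ∃ i ∈ l, x i = some false then some false else none := by
  induction l with
  | nil => simp [kleeneAnd, eval]
  | cons i l ih => rcases hxi : x i with _ | _ | _ <;> simp [kleeneAnd, eval, hxi, ih, eval_anyZero]

end TTree

open TTree in
theorem sizeU_of_and {ι : Type} [Fintype ι] {f : (ι → Bool) → Bool}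
    (hf : ∀ y, f y = true ↔ ∀ i, y i = true) : sizeU f = 2 ^ (Fintype.card ι + 1) - 1 := by
  have hsize := size_kleeneAnd (univ : Finset ι).toList
  rw [length_toList, card_univ] at hsize
  refine IsLeast.csInf_eq ⟨⟨kleeneAnd univ.toList, fun x => ?_, by omega⟩, ?_⟩
  · rw [eval_kleeneAnd, hfext_of_and hf]
    simp only [mem_toList, mem_univ, true_implies, true_and]
    congr
  · rintro s ⟨T, hT, rfl⟩
    have hflags : T.FlagsZeroOn (some false) univ fun _ => none := fun x _ => by
      rw [hT, hfext_of_and hf]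
      split_ifs <;> simp_all
    have := hflags.two_pow_card_le
    rw [card_univ] at this
    omega

theorem stmt13_general (n : ℕ) :
    sizeU (fun x : Fin n → Bool => decide (∀ i, x i = true)) = 2^(n+1) - 1 := by
  simpa using sizeU_of_and (f := fun x : Fin n → Bool => decide (∀ i, x i = true)) (by simp)

/-- `size_u(AND_n) = 2^{n+1} − 1`. -/
theorem stmt13 (n : ℕ) (hn : 1 ≤ n) :
    sizeU (fun x : Fin n → Bool => decide (∀ i, x i = true)) = 2^(n+1) - 1 :=
  stmt13_general n
end

section
/- Let f : {0,1}^n → {0,1} be non-constant, let m be the number of prime implicants of f and M the number of prime implicates of f. Then every ternary decision tree computing the hazard-free extension f̃ has at least m + M leaves, i.e., size_u(f) ≥ m + M. -/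
attribute [local instance 0] Classical.propDecidable

namespace Stmt14Aux

variable {ι : Type}

/-- The path (sequence of branch choices) that input `x` takes in tree `T`. -/
def path : TTree ι → (ι → Option Bool) → List (Fin 3)
  | .leaf _, _ => []
  | .node i t0 tu t1, x =>
    match x i with
    | some false => 0 :: path t0 x
    | none => 1 :: path tu x
    | some true => 2 :: path t1 x

lemma key (T : TTree ι) {x y : ι → Option Bool} (h : path T x = path T y) :
    T.eval x = T.eval y ∧
      path T (fun i => if x i = y i then x i else none) = path T x := by
  induction T with
  | leaf b => exact ⟨rfl, rfl⟩
  | node i t0 tu t1 ih0 ihu ih1 =>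
    cases hx : x i with
    | none =>
      cases hy : y i with
      | none =>
        have hxy : x i = y i := by rw [hx, hy]
        have hzi : (if x i = y i then x i else none) = x i := if_pos hxy
        simp only [path, hx, hy, List.cons.injEq, true_and] at h
        obtain ⟨he, hp⟩ := ihu h
        refine ⟨by simp only [TTree.eval, hx, hy]; exact he, ?_⟩
        simp [path, hx, hy, hp]
      | some b =>
        cases b <;> simp [path, hx, hy] at h
    | some bx =>
      cases hy : y i with
      | none => cases bx <;> simp [path, hx, hy] at h
      | some by' =>
        cases bx <;> cases by' <;>
          simp only [path, hx, hy, List.cons.injEq] at h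
        · have hxy : x i = y i := by rw [hx, hy]
          have hzi : (if x i = y i then x i else none) = x i := if_pos hxy
          obtain ⟨he, hp⟩ := ih0 h.2
          refine ⟨by simp only [TTree.eval, hx, hy]; exact he, ?_⟩
          simp [path, hx, hy, hp]
        · exact absurd h.1 (by decide)
        · exact absurd h.1 (by decide)
        · have hxy : x i = y i := by rw [hx, hy]
          have hzi : (if x i = y i then x i else none) = x i := if_pos hxy
          obtain ⟨he, hp⟩ := ih1 h.2
          refine ⟨by simp only [TTree.eval, hx, hy]; exact he, ?_⟩
          simp [path, hx, hy, hp]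

lemma card_le_size (T : TTree ι) (S : Finset (ι → Option Bool))
    (hinj : ∀ x ∈ S, ∀ y ∈ S, path T x = path T y → x = y) :
    S.card ≤ T.size := by
  induction T generalizing S with
  | leaf b =>
    exact Finset.card_le_one.mpr (fun x hx y hy => hinj x hx y hy rfl)
  | node i t0 tu t1 ih0 ihu ih1 =>
    classical
    set S0 := S.filter (fun x => x i = some false) with hS0
    set Su := S.filter (fun x => x i = none) with hSu
    set S1 := S.filter (fun x => x i = some true) with hS1
    have hsub : S ⊆ S0 ∪ Su ∪ S1 := by
      intro x hx
      simp only [hS0, hSu, hS1, Finset.mem_union, Finset.mem_filter]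
      cases hxi : x i with
      | none => exact Or.inl (Or.inr ⟨hx, rfl⟩)
      | some b => cases b with
        | false => exact Or.inl (Or.inl ⟨hx, rfl⟩)
        | true => exact Or.inr ⟨hx, rfl⟩
    have h0 : S0.card ≤ t0.size := by
      refine ih0 S0 ?_
      intro x hx y hy hp
      obtain ⟨hxS, hxi⟩ := Finset.mem_filter.mp hx
      obtain ⟨hyS, hyi⟩ := Finset.mem_filter.mp hy
      exact hinj x hxS y hyS (by simp only [path, hxi, hyi, hp])
    have hu : Su.card ≤ tu.size := by
      refine ihu Su ?_
      intro x hx y hy hp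
      obtain ⟨hxS, hxi⟩ := Finset.mem_filter.mp hx
      obtain ⟨hyS, hyi⟩ := Finset.mem_filter.mp hy
      exact hinj x hxS y hyS (by simp only [path, hxi, hyi, hp])
    have h1 : S1.card ≤ t1.size := by
      refine ih1 S1 ?_
      intro x hx y hy hp
      obtain ⟨hxS, hxi⟩ := Finset.mem_filter.mp hx
      obtain ⟨hyS, hyi⟩ := Finset.mem_filter.mp hy
      exact hinj x hxS y hyS (by simp only [path, hxi, hyi, hp])
    have hc : S.card ≤ S0.card + Su.card + S1.card := by
      calc S.card ≤ (S0 ∪ Su ∪ S1).card := Finset.card_le_card hsub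
        _ ≤ (S0 ∪ Su).card + S1.card := Finset.card_union_le _ _
        _ ≤ S0.card + Su.card + S1.card :=
            Nat.add_le_add_right (Finset.card_union_le _ _) _
    simp only [TTree.size]
    omega

lemma res_nonempty (x : ι → Option Bool) : ∃ y, y ∈ Res x :=
  ⟨fun i => (x i).getD false, fun i b h => by simp [h]⟩

lemma hfext_true (f : (ι → Bool) → Bool) (x : ι → Option Bool) :
    hfext f x = some true ↔ IsImplicant f x := by
  constructor
  · intro h y hy
    by_cases h1 : ∀ y ∈ Res x, f y = true
    · exact h1 y hy
    · exfalso
      unfold hfext at h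
      rw [if_neg h1] at h
      by_cases h2 : ∀ y ∈ Res x, f y = false
      · rw [if_pos h2] at h; simp at h
      · rw [if_neg h2] at h; simp at h
  · intro h
    have hc : ∀ y ∈ Res x, f y = true := fun y hy => h y hy
    unfold hfext
    rw [if_pos hc]

lemma hfext_false (f : (ι → Bool) → Bool) (x : ι → Option Bool) :
    hfext f x = some false ↔ IsImplicate f x := by
  constructor
  · intro h y hy
    by_cases h2 : ∀ y ∈ Res x, f y = false
    · exact h2 y hy
    · exfalso
      unfold hfext at h
      by_cases h1 : ∀ y ∈ Res x, f y = true
      · rw [if_pos h1] at h; simp at h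
      · rw [if_neg h1, if_neg h2] at h; simp at h
  · intro h
    obtain ⟨y0, hy0⟩ := res_nonempty x
    have hcf : ∀ y ∈ Res x, f y = false := fun y hy => h y hy
    have hct : ¬ ∀ y ∈ Res x, f y = true := by
      intro hall
      have ht := hall y0 hy0
      have hf := hcf y0 hy0
      rw [ht] at hf
      exact Bool.noConfusion hf
    unfold hfext
    rw [if_neg hct, if_pos hcf]

noncomputable def fullTree [DecidableEq ι] (g : (ι → Option Bool) → Option Bool) :
    List ι → (ι → Option Bool) → TTree ι
  | [], acc => .leaf (g acc)
  | i :: l, acc =>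
    .node i (fullTree g l (Function.update acc i (some false)))
            (fullTree g l (Function.update acc i none))
            (fullTree g l (Function.update acc i (some true)))

lemma fullTree_eval [DecidableEq ι] (g : (ι → Option Bool) → Option Bool)
    (l : List ι) (acc x : ι → Option Bool) :
    (fullTree g l acc).eval x = g (fun i => if i ∈ l then x i else acc i) := by
  induction l generalizing acc with
  | nil =>
    show g acc = g (fun i => if i ∈ ([] : List ι) then x i else acc i)
    congr 1
  | cons i l ih =>
    have hbr : ∀ (v : Option Bool), x i = v →
        (fullTree g l (Function.update acc i v)).eval x =
          g (fun j => if j ∈ i :: l then x j else acc j) := by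
      intro v hv
      rw [ih]
      congr 1
      funext j
      by_cases hj : j ∈ l
      · simp [hj]
      · by_cases hji : j = i
        · subst hji
          simp [hj, Function.update_self, hv]
        · simp [hj, hji, Function.update_of_ne hji]
    cases hx : x i with
    | none =>
      simpa only [fullTree, TTree.eval, hx] using hbr none hx
    | some b =>
      cases b with
      | false => simpa only [fullTree, TTree.eval, hx] using hbr (some false) hx
      | true => simpa only [fullTree, TTree.eval, hx] using hbr (some true) hx

end Stmt14Aux

/-- Every ternary decision tree computing `f̃` has at least `m + M` leaves,
where `m` (resp. `M`) is the number of prime implicants (resp. implicates) of `f`;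
in particular `size_u(f) ≥ m + M`. -/



theorem stmt14 {n : ℕ} (f : (Fin n → Bool) → Bool)
    (hnc : ∃ y z : Fin n → Bool, f y ≠ f z)
    (m M : ℕ)
    (hm : m = (Finset.univ.filter
        fun q : Fin n → Option Bool => IsPrimeImplicant f q).card)
    (hM : M = (Finset.univ.filter
        fun q : Fin n → Option Bool => IsPrimeImplicate f q).card) :
    (∀ T : TTree (Fin n), (∀ x, T.eval x = hfext f x) → m + M ≤ T.size) ∧
    m + M ≤ sizeU f := by
  classical
  have hmain : ∀ T : TTree (Fin n), (∀ x, T.eval x = hfext f x) → m + M ≤ T.size := by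
    intro T hT
    set A := Finset.univ.filter
        (fun q : Fin n → Option Bool => IsPrimeImplicant f q) with hA
    set B := Finset.univ.filter
        (fun q : Fin n → Option Bool => IsPrimeImplicate f q) with hB
    have hdisj : Disjoint A B := by
      rw [Finset.disjoint_left]
      intro q hqA hqB
      obtain ⟨y0, hy0⟩ := Stmt14Aux.res_nonempty q
      have h1 := (Finset.mem_filter.mp hqA).2.1 y0 hy0
      have h2 := (Finset.mem_filter.mp hqB).2.1 y0 hy0
      rw [h1] at h2; exact Bool.noConfusion h2
    have hinjA : ∀ x y : Fin n → Option Bool, IsPrimeImplicant f x →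
        IsPrimeImplicant f y → Stmt14Aux.path T x = Stmt14Aux.path T y → x = y := by
      intro x y hx hy hp
      set z : Fin n → Option Bool := fun i => if x i = y i then x i else none with hzdef
      have hz : Stmt14Aux.path T z = Stmt14Aux.path T x := (Stmt14Aux.key T hp).2
      have hez : T.eval z = T.eval x := (Stmt14Aux.key T hz).1
      have hzt : hfext f z = some true := by
        rw [← hT, hez, hT]
        exact (Stmt14Aux.hfext_true f x).mpr hx.1
      have hzimp : IsImplicant f z := (Stmt14Aux.hfext_true f z).mp hzt
      have hsubx : SubAsn z x := by
        intro i b hb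
        by_cases hxy : x i = y i
        · simpa [hzdef, hxy] using hb
        · simp [hzdef, hxy] at hb
      have hsuby : SubAsn z y := by
        intro i b hb
        by_cases hxy : x i = y i
        · rw [← hxy]; simpa [hzdef, hxy] using hb
        · simp [hzdef, hxy] at hb
      have hzx : z = x := by
        by_contra hne; exact hx.2 z hsubx hne hzimp
      have hzy : z = y := by
        by_contra hne; exact hy.2 z hsuby hne hzimp
      rw [← hzx, hzy]
    have hinjB : ∀ x y : Fin n → Option Bool, IsPrimeImplicate f x →
        IsPrimeImplicate f y → Stmt14Aux.path T x = Stmt14Aux.path T y → x = y := by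
      intro x y hx hy hp
      set z : Fin n → Option Bool := fun i => if x i = y i then x i else none with hzdef
      have hz : Stmt14Aux.path T z = Stmt14Aux.path T x := (Stmt14Aux.key T hp).2
      have hez : T.eval z = T.eval x := (Stmt14Aux.key T hz).1
      have hzt : hfext f z = some false := by
        rw [← hT, hez, hT]
        exact (Stmt14Aux.hfext_false f x).mpr hx.1
      have hzimp : IsImplicate f z := (Stmt14Aux.hfext_false f z).mp hzt
      have hsubx : SubAsn z x := by
        intro i b hb
        by_cases hxy : x i = y i
        · simpa [hzdef, hxy] using hb
        · simp [hzdef, hxy] at hb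
      have hsuby : SubAsn z y := by
        intro i b hb
        by_cases hxy : x i = y i
        · rw [← hxy]; simpa [hzdef, hxy] using hb
        · simp [hzdef, hxy] at hb
      have hzx : z = x := by
        by_contra hne; exact hx.2 z hsubx hne hzimp
      have hzy : z = y := by
        by_contra hne; exact hy.2 z hsuby hne hzimp
      rw [← hzx, hzy]
    have hinj : ∀ x ∈ A ∪ B, ∀ y ∈ A ∪ B,
        Stmt14Aux.path T x = Stmt14Aux.path T y → x = y := by
      intro x hx y hy hp
      rw [Finset.mem_union] at hx hy
      have heval : hfext f x = hfext f y := by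
        rw [← hT, ← hT]; exact (Stmt14Aux.key T hp).1
      rcases hx with hx | hx <;> rcases hy with hy | hy
      · exact hinjA x y (Finset.mem_filter.mp hx).2 (Finset.mem_filter.mp hy).2 hp
      · exfalso
        have h1 : hfext f x = some true :=
          (Stmt14Aux.hfext_true f x).mpr (Finset.mem_filter.mp hx).2.1
        have h2 : hfext f y = some false :=
          (Stmt14Aux.hfext_false f y).mpr (Finset.mem_filter.mp hy).2.1
        rw [h1, h2] at heval
        simp at heval
      · exfalso
        have h1 : hfext f x = some false :=
          (Stmt14Aux.hfext_false f x).mpr (Finset.mem_filter.mp hx).2.1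
        have h2 : hfext f y = some true :=
          (Stmt14Aux.hfext_true f y).mpr (Finset.mem_filter.mp hy).2.1
        rw [h1, h2] at heval
        simp at heval
      · exact hinjB x y (Finset.mem_filter.mp hx).2 (Finset.mem_filter.mp hy).2 hp
    have hcard : (A ∪ B).card ≤ T.size := Stmt14Aux.card_le_size T _ hinj
    have hcard2 : (A ∪ B).card = A.card + B.card :=
      Finset.card_union_of_disjoint hdisj
    rw [hm, hM]
    rw [hcard2] at hcard
    exact hcard
  refine ⟨hmain, ?_⟩
  have hex : ∃ T : TTree (Fin n), ∀ x, T.eval x = hfext f x := by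
    refine ⟨Stmt14Aux.fullTree (hfext f) (List.finRange n) (fun _ => none), ?_⟩
    intro x
    rw [Stmt14Aux.fullTree_eval]
    congr 1
    funext i
    simp [List.mem_finRange]
  obtain ⟨T, hT⟩ := hex
  refine le_csInf ⟨T.size, T, hT, rfl⟩ ?_
  rintro s ⟨T', hT', rfl⟩
  exact hmain T' hT'
end

section
/- Let n be a positive multiple of 3 and let cm_n : {0,1}^n → {0,1} output 1 iff both the number of 0s and the number of 1s in the input lie in the interval [n/3, 2n/3]. Then cm_n has exactly C(n, n/3)·C(2n/3, n/3) prime implicants, and consequently every ternary decision tree computing the hazard-free extension of cm_n has at least C(n, n/3)·C(2n/3, n/3) leaves. -/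
attribute [local instance 0] Classical.propDecidable

/-- `cm_n` outputs 1 iff both the number of 0s and the number of 1s of the input
lie in `[n/3, 2n/3]`. -/
def cm (n : ℕ) (x : Fin n → Bool) : Bool :=
  decide (n/3 ≤ (Finset.univ.filter fun i => x i = false).card ∧
          (Finset.univ.filter fun i => x i = false).card ≤ 2*n/3 ∧
          n/3 ≤ (Finset.univ.filter fun i => x i = true).card ∧
          (Finset.univ.filter fun i => x i = true).card ≤ 2*n/3)

/-!
An implicant of `cm (3 * m)` fixes at least `m` variables to each value `b`: otherwise its
completion by `!b` has too few `b`s. Dropping a literal of an assignment with more than `m`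
literals of one value keeps it an implicant, so the prime implicants are exactly the assignments
with `m` negative and `m` positive literals: choose the `m` negative positions, then `m` of the
remaining `2m`.

A ternary tree computing the hazard-free extension of `f` queries, on input a prime implicant `q`,
every variable that `q` fixes: the restriction of `q` to the queried variables is again an
implicant, since each of its Boolean completions `y` lies in `Res z` for a ternary `z` that follows
the same path as `q` and so gets the answer `1`. Hence `q` can be read off its path, and distinct
prime implicants reach distinct leaves.
-/

open Finset

section HazardFree

variable {ι : Type} {f : (ι → Bool) → Bool}

theorem hfext_eq_some_true_iff {x : ι → Option Bool} :
    hfext f x = some true ↔ ∀ y ∈ Res x, f y = true := by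
  unfold hfext
  split_ifs <;> simp_all

theorem isImplicant_iff_hfext_eq_some_true {q : ι → Option Bool} :
    IsImplicant f q ↔ hfext f q = some true := by
  rw [hfext_eq_some_true_iff]
  rfl

theorem IsPrimeImplicant.mem_of_isImplicant_restrict {q : ι → Option Bool}
    (hq : IsPrimeImplicant f q) {S : Set ι} [DecidablePred (· ∈ S)]
    (hS : IsImplicant f fun j => if j ∈ S then q j else none) {i : ι} (hi : q i ≠ none) :
    i ∈ S := by
  by_contra hiS
  refine hq.2 _ (fun j b hj => ?_) (fun h => hi ?_) hS
  · split_ifs at hj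
    exact hj
  · simpa [hiS] using (congrFun h i).symm

end HazardFree

namespace TTree

variable {ι : Type}

def branch (v : Option Bool) (t0 tu t1 : TTree ι) : TTree ι :=
  match v with
  | some false => t0
  | none => tu
  | some true => t1

theorem branch_induction {P : TTree ι → Prop} (v : Option Bool) {t0 tu t1 : TTree ι}
    (h0 : P t0) (hu : P tu) (h1 : P t1) : P (branch v t0 tu t1) := by
  rcases v with _ | _ | _ <;> assumption

theorem eval_node (i : ι) (t0 tu t1 : TTree ι) (x : ι → Option Bool) :
    (node i t0 tu t1).eval x = (branch (x i) t0 tu t1).eval x := by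
  simp only [eval, branch]
  split <;> rfl

def path : TTree ι → (ι → Option Bool) → List (ι × Option Bool)
  | .leaf _, _ => []
  | .node i t0 tu t1, x => (i, x i) :: match x i with
    | some false => path t0 x
    | none => path tu x
    | some true => path t1 x

theorem path_node (i : ι) (t0 tu t1 : TTree ι) (x : ι → Option Bool) :
    (node i t0 tu t1).path x = (i, x i) :: (branch (x i) t0 tu t1).path x := by
  simp only [path, branch]
  split <;> rfl

theorem apply_eq_of_mem_path {T : TTree ι} {x : ι → Option Bool} {p : ι × Option Bool}
    (hp : p ∈ T.path x) : x p.1 = p.2 := by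
  induction T with
  | leaf => simp [path] at hp
  | node i t0 tu t1 ih0 ihu ih1 =>
    rw [path_node, List.mem_cons] at hp
    rcases hp with rfl | hp
    · rfl
    · exact branch_induction (P := fun t => p ∈ t.path x → x p.1 = p.2) (x i) ih0 ihu ih1 hp

theorem eval_eq_of_agree_on_path {T : TTree ι} {x x' : ι → Option Bool}
    (h : ∀ p ∈ T.path x, x' p.1 = p.2) : T.eval x' = T.eval x := by
  induction T with
  | leaf => rfl
  | node i t0 tu t1 ih0 ihu ih1 =>
    simp only [path_node, List.forall_mem_cons] at h
    rw [eval_node, eval_node, h.1]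
    exact branch_induction
      (P := fun t => (∀ p ∈ t.path x, x' p.1 = p.2) → t.eval x' = t.eval x)
      (x i) ih0 ihu ih1 h.2

def paths : TTree ι → List (List (ι × Option Bool))
  | .leaf _ => [[]]
  | .node i t0 tu t1 =>
    t0.paths.map (List.cons (i, some false)) ++ tu.paths.map (List.cons (i, none)) ++
      t1.paths.map (List.cons (i, some true))

theorem length_paths (T : TTree ι) : T.paths.length = T.size := by
  induction T with
  | leaf => rfl
  | node i t0 tu t1 ih0 ihu ih1 => simp [paths, size, ih0, ihu, ih1, add_assoc]

theorem path_mem_paths (T : TTree ι) (x : ι → Option Bool) : T.path x ∈ T.paths := by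
  induction T with
  | leaf => simp [path, paths]
  | node i t0 tu t1 ih0 ihu ih1 =>
    rw [path_node]
    rcases hx : x i with _ | _ | _ <;> simp [paths, branch, ih0, ihu, ih1]

end TTree

section PrimeImplicantsAndTrees

open TTree

variable {ι : Type} {f : (ι → Bool) → Bool} {T : TTree ι}

theorem IsPrimeImplicant.mem_path (hT : ∀ x, T.eval x = hfext f x) {q : ι → Option Bool}
    (hq : IsPrimeImplicant f q) {i : ι} {b : Bool} (hqi : q i = some b) :
    (i, some b) ∈ T.path q := by
  set S : Set ι := {j | ∃ v, (j, v) ∈ T.path q}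
  have hrestrict : IsImplicant f fun j => if j ∈ S then q j else none := by
    intro y hy
    -- `z` agrees with `q` on the queried coordinates, so `T` answers `true` on it as on `q`.
    set z : ι → Option Bool := fun j => if j ∈ S then q j else some (y j)
    have hz : hfext f z = some true := by
      rw [← hT, eval_eq_of_agree_on_path, hT, ← isImplicant_iff_hfext_eq_some_true]
      · exact hq.1
      · intro p hp
        simp only [z, if_pos (show p.1 ∈ S from ⟨p.2, hp⟩)]
        exact apply_eq_of_mem_path hp
    refine hfext_eq_some_true_iff.1 hz y fun j c hj => ?_
    simp only [z] at hj
    split_ifs at hj with hjS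
    · exact hy j c (by simpa [hjS] using hj)
    · exact Option.some_injective _ hj
  obtain ⟨v, hv⟩ := hq.mem_of_isImplicant_restrict hrestrict (i := i) (by simp [hqi])
  rwa [← show q i = v from apply_eq_of_mem_path hv, hqi] at hv

theorem IsPrimeImplicant.apply_eq_some_iff_mem_path (hT : ∀ x, T.eval x = hfext f x)
    {q : ι → Option Bool} (hq : IsPrimeImplicant f q) {i : ι} {b : Bool} :
    q i = some b ↔ (i, some b) ∈ T.path q :=
  ⟨hq.mem_path hT, apply_eq_of_mem_path⟩

theorem injOn_path_primeImplicants (hT : ∀ x, T.eval x = hfext f x) :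
    Set.InjOn T.path {q | IsPrimeImplicant f q} := by
  intro q hq q' hq' h
  funext j
  apply Option.ext
  intro b
  rw [hq.apply_eq_some_iff_mem_path hT, hq'.apply_eq_some_iff_mem_path hT, h]

theorem card_primeImplicants_le_size [Fintype ι] [DecidableEq ι]
    (hT : ∀ x, T.eval x = hfext f x) :
    #(univ.filter fun q : ι → Option Bool => IsPrimeImplicant f q) ≤ T.size := by
  calc #(univ.filter fun q : ι → Option Bool => IsPrimeImplicant f q)
      = #((univ.filter fun q : ι → Option Bool => IsPrimeImplicant f q).image T.path) :=
        (card_image_of_injOn fun q hq q' hq' =>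
          injOn_path_primeImplicants hT (mem_filter.1 hq).2 (mem_filter.1 hq').2).symm
    _ ≤ #T.paths.toFinset :=
        card_le_card (image_subset_iff.2 fun q _ => List.mem_toFinset.2 (path_mem_paths T q))
    _ ≤ T.paths.length := List.toFinset_card_le _
    _ = T.size := length_paths T

end PrimeImplicantsAndTrees

section Literals

variable {ι : Type} [Fintype ι]

def lits (q : ι → Option Bool) (b : Bool) : Finset ι :=
  univ.filter fun i => q i = some b

def ofLits [DecidableEq ι] (A B : Finset ι) (i : ι) : Option Bool :=
  if i ∈ A then some false else if i ∈ B then some true else none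

@[simp]
theorem mem_lits {q : ι → Option Bool} {b : Bool} {i : ι} :
    i ∈ lits q b ↔ q i = some b := by
  simp [lits]

theorem SubAsn.lits_subset {q' q : ι → Option Bool} (h : SubAsn q' q) (b : Bool) :
    lits q' b ⊆ lits q b := fun i hi => mem_lits.2 (h i b (mem_lits.1 hi))

theorem SubAsn.exists_lits_ssubset {q' q : ι → Option Bool} (h : SubAsn q' q) (hne : q' ≠ q) :
    ∃ b, lits q' b ⊂ lits q b := by
  obtain ⟨i, hi⟩ := Function.ne_iff.1 hne
  have hq'i : q' i = none := by
    by_contra hsome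
    obtain ⟨c, hc⟩ := Option.ne_none_iff_exists'.1 hsome
    exact hi (hc.trans (h i c hc).symm)
  obtain ⟨b, hb⟩ :=
    Option.ne_none_iff_exists'.1 fun hqi : q i = none => hi (hq'i.trans hqi.symm)
  exact ⟨b, (ssubset_iff_of_subset (h.lits_subset b)).2 ⟨i, mem_lits.2 hb, by simp [hq'i]⟩⟩

theorem lits_update_none [DecidableEq ι] (q : ι → Option Bool) (i : ι) (b : Bool) :
    lits (Function.update q i none) b = (lits q b).erase i := by
  ext j
  by_cases hj : j = i <;> simp [hj]

theorem lits_ofLits_false [DecidableEq ι] (A B : Finset ι) : lits (ofLits A B) false = A := by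
  ext i
  by_cases hA : i ∈ A <;> by_cases hB : i ∈ B <;> simp [ofLits, hA, hB]

theorem lits_ofLits_true [DecidableEq ι] {A B : Finset ι} (h : Disjoint A B) :
    lits (ofLits A B) true = B := by
  ext i
  by_cases hA : i ∈ A <;> by_cases hB : i ∈ B <;> simp [ofLits, hA, hB]
  exact disjoint_left.1 h hA hB

theorem ofLits_lits [DecidableEq ι] (q : ι → Option Bool) :
    ofLits (lits q false) (lits q true) = q := by
  funext i
  rcases h : q i with _ | _ | _ <;> simp [ofLits, h]

theorem disjoint_lits_false_true (q : ι → Option Bool) : Disjoint (lits q false) (lits q true) :=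
  disjoint_left.2 fun i hf ht => by simp_all

theorem card_filter_card_lits_eq [DecidableEq ι] (a c : ℕ) :
    #(univ.filter fun q : ι → Option Bool => #(lits q false) = a ∧ #(lits q true) = c)
      = (Fintype.card ι).choose a * (Fintype.card ι - a).choose c := by
  calc _ = #((powersetCard a univ).sigma fun A : Finset ι => powersetCard c Aᶜ) := by
        refine card_nbij' (fun q => ⟨lits q false, lits q true⟩) (fun p => ofLits p.1 p.2)
          ?_ ?_ (fun q _ => ofLits_lits q) ?_
        · intro q hq
          simp only [coe_filter, Set.mem_ofPred_eq, mem_univ, true_and] at hq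
          simp only [coe_sigma, Set.mem_sigma_iff, mem_coe, mem_powersetCard, subset_univ,
            true_and, hq, and_true]
          exact subset_compl_iff_disjoint_left.2 (disjoint_lits_false_true q)
        · rintro ⟨A, B⟩ hAB
          simp only [coe_sigma, Set.mem_sigma_iff, mem_coe, mem_powersetCard] at hAB
          simp only [coe_filter, Set.mem_ofPred_eq, mem_univ, true_and]
          rw [lits_ofLits_false, lits_ofLits_true (subset_compl_iff_disjoint_left.1 hAB.2.1)]
          exact ⟨hAB.1.2, hAB.2.2⟩
        · rintro ⟨A, B⟩ hAB
          simp only [coe_sigma, Set.mem_sigma_iff, mem_coe, mem_powersetCard] at hAB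
          dsimp only
          rw [lits_ofLits_false, lits_ofLits_true (subset_compl_iff_disjoint_left.1 hAB.2.1)]
    _ = _ := by
        rw [card_sigma, sum_congr rfl fun A hA => by
          rw [card_powersetCard, card_compl, (mem_powersetCard.1 hA).2]]
        simp

theorem card_filter_eq_false_add_card_filter_eq_true (y : ι → Bool) :
    #(univ.filter fun i => y i = false) + #(univ.filter fun i => y i = true) = Fintype.card ι := by
  simpa [add_comm] using card_filter_add_card_filter_not (s := univ) fun i => y i = true

end Literals

section CM

variable {m : ℕ}

theorem cm_eq_true_iff (y : Fin (3 * m) → Bool) :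
    cm (3 * m) y = true ↔ ∀ b, m ≤ #(univ.filter fun i => y i = b) := by
  have := card_filter_eq_false_add_card_filter_eq_true y
  simp only [cm, decide_eq_true_eq, Bool.forall_bool, Fintype.card_fin] at this ⊢
  omega

theorem isImplicant_cm_iff (q : Fin (3 * m) → Option Bool) :
    IsImplicant (cm (3 * m)) q ↔ ∀ b, m ≤ #(lits q b) := by
  constructor
  · intro hq b
    -- Complete `q` by the literal `!b` everywhere else: its `b`-positions are exactly `lits q b`.
    have hcomplete := (cm_eq_true_iff _).1
      (hq (fun i => (q i).getD !b) fun i c hi => by simp [hi]) b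
    convert hcomplete using 2
    ext i
    rcases h : q i with _ | c <;> simp [h]
  · intro hq y hy
    refine (cm_eq_true_iff y).2 fun b => (hq b).trans (card_le_card fun i hi => ?_)
    simpa using hy i b (mem_lits.1 hi)

theorem isPrimeImplicant_cm_iff (q : Fin (3 * m) → Option Bool) :
    IsPrimeImplicant (cm (3 * m)) q ↔ ∀ b, #(lits q b) = m := by
  simp only [IsPrimeImplicant, isImplicant_cm_iff]
  constructor
  · rintro ⟨himp, hprime⟩
    by_contra! ⟨b, hb⟩
    obtain ⟨i, hi⟩ : (lits q b).Nonempty := card_pos.1 (by have := himp b; omega)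
    refine hprime (Function.update q i none) ?_ ?_ fun c => ?_
    · intro j c hj
      by_cases hji : j = i
      · simp [hji] at hj
      · rwa [Function.update_of_ne hji] at hj
    · intro heq
      simpa [(mem_lits.1 hi)] using (congrFun heq i).symm
    · rw [lits_update_none]
      by_cases hcb : c = b
      · subst hcb
        have := himp c
        rw [card_erase_of_mem hi]
        omega
      · rw [erase_eq_of_notMem (by simp [mem_lits.1 hi, Ne.symm hcb])]
        exact himp c
  · intro hq
    refine ⟨fun b => (hq b).ge, fun q' hsub hne himp => ?_⟩
    obtain ⟨b, hb⟩ := hsub.exists_lits_ssubset hne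
    have := card_lt_card hb
    have := himp b
    have := hq b
    omega

end CM

theorem stmt15_general (n : ℕ) (h3 : 3 ∣ n) :
    (Finset.univ.filter
        fun q : Fin n → Option Bool => IsPrimeImplicant (cm n) q).card
      = Nat.choose n (n/3) * Nat.choose (2*n/3) (n/3) ∧
    ∀ T : TTree (Fin n), (∀ x, T.eval x = hfext (cm n) x) →
      Nat.choose n (n/3) * Nat.choose (2*n/3) (n/3) ≤ T.size := by
  obtain ⟨m, rfl⟩ := h3
  have hcount : #(univ.filter fun q : Fin (3 * m) → Option Bool =>
      IsPrimeImplicant (cm (3 * m)) q) = (3 * m).choose m * (2 * m).choose m := by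
    simp only [isPrimeImplicant_cm_iff, Bool.forall_bool]
    rw [card_filter_card_lits_eq, Fintype.card_fin, show 3 * m - m = 2 * m by omega]
  rw [show 3 * m / 3 = m by omega, show 2 * (3 * m) / 3 = 2 * m by omega]
  exact ⟨hcount, fun T hT => hcount ▸ card_primeImplicants_le_size hT⟩

/-- `cm_n` has exactly `C(n, n/3)·C(2n/3, n/3)` prime implicants, and hence
every ternary decision tree computing its hazard-free extension has at least
that many leaves. -/
theorem stmt15 (n : ℕ) (hn : 0 < n) (h3 : 3 ∣ n) :
    (Finset.univ.filter
        fun q : Fin n → Option Bool => IsPrimeImplicant (cm n) q).card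
      = Nat.choose n (n/3) * Nat.choose (2*n/3) (n/3) ∧
    ∀ T : TTree (Fin n), (∀ x, T.eval x = hfext (cm n) x) →
      Nat.choose n (n/3) * Nat.choose (2*n/3) (n/3) ≤ T.size :=
  stmt15_general n h3
end

section
/- For every Boolean function f : {0,1}^n → {0,1}, 2·size(f) − 1 ≤ size_u(f) ≤ 2^{size(f)} − 1, where size(f) is the minimum number of leaves of a Boolean decision tree computing f and size_u(f) is the minimum number of leaves of a ternary decision tree computing the hazard-free extension f̃. -/
attribute [local instance 0] Classical.propDecidable

namespace Stmt16Aux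

lemma mem_res_getD {ι : Type} (x : ι → Option Bool) :
    (fun i => (x i).getD false) ∈ Res x := by
  intro i b h
  simp [h]

lemma hfext_congr {ι : Type} {f g : (ι → Bool) → Bool} {x : ι → Option Bool}
    (h : ∀ y ∈ Res x, f y = g y) : hfext f x = hfext g x := by
  have h1 : (∀ y ∈ Res x, f y = true) = (∀ y ∈ Res x, g y = true) := by
    refine propext ⟨fun H y hy => (h y hy).symm.trans (H y hy),
      fun H y hy => (h y hy).trans (H y hy)⟩
  have h2 : (∀ y ∈ Res x, f y = false) = (∀ y ∈ Res x, g y = false) := by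
    refine propext ⟨fun H y hy => (h y hy).symm.trans (H y hy),
      fun H y hy => (h y hy).trans (H y hy)⟩
  unfold hfext
  rw [h1, h2]

lemma hfext_eq_true_iff {ι : Type} (f : (ι → Bool) → Bool) (x : ι → Option Bool) :
    hfext f x = some true ↔ ∀ y ∈ Res x, f y = true := by
  unfold hfext
  split_ifs with h1 h2
  · exact ⟨fun _ => h1, fun _ => rfl⟩
  · exact ⟨fun h => by simp at h, fun h => absurd h h1⟩
  · exact ⟨fun h => by simp at h, fun h => absurd h h1⟩

lemma hfext_eq_false_iff {ι : Type} (f : (ι → Bool) → Bool) (x : ι → Option Bool) :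
    hfext f x = some false ↔ ∀ y ∈ Res x, f y = false := by
  unfold hfext
  split_ifs with h1 h2
  · constructor
    · intro h; cases h
    · intro h
      have ht := h1 _ (mem_res_getD x)
      have hf := h _ (mem_res_getD x)
      rw [ht] at hf; cases hf
  · exact ⟨fun _ => h2, fun _ => rfl⟩
  · exact ⟨fun h => by simp at h, fun h => absurd h h2⟩

lemma hfext_eq_none_iff {ι : Type} (f : (ι → Bool) → Bool) (x : ι → Option Bool) :
    hfext f x = none ↔ ¬(∀ y ∈ Res x, f y = true) ∧ ¬(∀ y ∈ Res x, f y = false) := by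
  unfold hfext
  split_ifs with h1 h2
  · exact ⟨fun h => by simp at h, fun h => absurd h1 h.1⟩
  · exact ⟨fun h => by simp at h, fun h => absurd h2 h.2⟩
  · exact ⟨fun _ => ⟨h1, h2⟩, fun _ => rfl⟩

lemma res_some {ι : Type} (x : ι → Bool) (y : ι → Bool) :
    y ∈ Res (fun i => some (x i)) ↔ y = x := by
  constructor
  · intro h; funext i; exact h i (x i) rfl
  · rintro rfl i b hb; exact Option.some.inj hb

lemma hfext_bool {ι : Type} (f : (ι → Bool) → Bool) (x : ι → Bool) :
    hfext f (fun i => some (x i)) = some (f x) := by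
  cases hfx : f x
  · rw [hfext_eq_false_iff]
    intro y hy; rw [(res_some x y).mp hy]; exact hfx
  · rw [hfext_eq_true_iff]
    intro y hy; rw [(res_some x y).mp hy]; exact hfx

/-! ### Trees: basic facts -/

lemma ttree_size_pos {ι : Type} (T : TTree ι) : 1 ≤ T.size := by
  induction T with
  | leaf b => simp [TTree.size]
  | node i a b c iha ihb ihc => simp only [TTree.size]; omega

lemma btree_size_pos {ι : Type} (B : BTree ι) : 1 ≤ B.size := by
  induction B with
  | leaf b => simp [BTree.size]
  | node i a b iha ihb => simp only [BTree.size]; omega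

/-! ### Pruning a ternary tree into a Boolean tree -/

def prune {ι : Type} : TTree ι → BTree ι
  | .leaf (some b) => .leaf b
  | .leaf none => .leaf false
  | .node i t0 _ t1 => .node i (prune t0) (prune t1)

lemma prune_size {ι : Type} (T : TTree ι) : 2 * (prune T).size ≤ T.size + 1 := by
  induction T with
  | leaf ob => cases ob <;> simp [prune, BTree.size, TTree.size]
  | node i t0 tu t1 ih0 ihu ih1 =>
    have := ttree_size_pos tu
    simp only [prune, BTree.size, TTree.size]
    omega

lemma prune_eval {ι : Type} (T : TTree ι) (x : ι → Bool) (b : Bool)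
    (h : T.eval (fun i => some (x i)) = some b) : (prune T).eval x = b := by
  induction T with
  | leaf ob =>
    cases ob with
    | none => simp [TTree.eval] at h
    | some c =>
      simp only [TTree.eval] at h
      cases h
      simp [prune, BTree.eval]
  | node i t0 tu t1 ih0 ihu ih1 =>
    simp only [TTree.eval] at h
    cases hxi : x i with
    | false =>
      rw [hxi] at h
      simp only [prune, BTree.eval, hxi, if_false]
      exact ih0 h
    | true =>
      rw [hxi] at h
      simp only [prune, BTree.eval, hxi, if_true]
      exact ih1 h

/-! ### Relabeling and products of ternary trees -/

def merge3 (a b : Option Bool) : Option Bool := if a = b then a else none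

def relabel {ι : Type} (g : Option Bool → Option Bool) : TTree ι → TTree ι
  | .leaf c => .leaf (g c)
  | .node i a b c => .node i (relabel g a) (relabel g b) (relabel g c)

lemma relabel_size {ι : Type} (g : Option Bool → Option Bool) (T : TTree ι) :
    (relabel g T).size = T.size := by
  induction T with
  | leaf c => rfl
  | node i a b c iha ihb ihc => simp only [relabel, TTree.size, iha, ihb, ihc]

lemma relabel_eval {ι : Type} (g : Option Bool → Option Bool) (T : TTree ι)
    (x : ι → Option Bool) : (relabel g T).eval x = g (T.eval x) := by
  induction T with
  | leaf c => rfl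
  | node i a b c iha ihb ihc =>
    simp only [relabel, TTree.eval]
    cases hxi : x i with
    | none => exact ihb
    | some v => cases v <;> simp [iha, ihc]

def tprod {ι : Type} : TTree ι → TTree ι → TTree ι
  | .leaf c, T1 => relabel (merge3 c) T1
  | .node i a b c, T1 => .node i (tprod a T1) (tprod b T1) (tprod c T1)

lemma tprod_size {ι : Type} (T0 T1 : TTree ι) :
    (tprod T0 T1).size = T0.size * T1.size := by
  induction T0 with
  | leaf c => simp [tprod, TTree.size, relabel_size]
  | node i a b c iha ihb ihc =>
    simp only [tprod, TTree.size, iha, ihb, ihc]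
    ring

lemma tprod_eval {ι : Type} (T0 T1 : TTree ι) (x : ι → Option Bool) :
    (tprod T0 T1).eval x = merge3 (T0.eval x) (T1.eval x) := by
  induction T0 with
  | leaf c => simp [tprod, TTree.eval, relabel_eval]
  | node i a b c iha ihb ihc =>
    simp only [tprod, TTree.eval]
    cases hxi : x i with
    | none => exact ihb
    | some v => cases v <;> simp [iha, ihc]


/-! ### Restricting a Boolean tree by fixing a variable -/

def brestrict {ι : Type} [DecidableEq ι] (i : ι) (b : Bool) : BTree ι → BTree ι
  | .leaf c => .leaf c
  | .node j t0 t1 =>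
    if j = i then (if b then brestrict i b t1 else brestrict i b t0)
    else .node j (brestrict i b t0) (brestrict i b t1)

lemma brestrict_size {ι : Type} [DecidableEq ι] (i : ι) (b : Bool) (B : BTree ι) :
    (brestrict i b B).size ≤ B.size := by
  induction B with
  | leaf c => simp [brestrict]
  | node j t0 t1 ih0 ih1 =>
    by_cases hj : j = i
    · have h0 := btree_size_pos t0
      have h1 := btree_size_pos t1
      subst hj
      cases b <;> simp [brestrict, BTree.size] <;> omega
    · simp only [brestrict, hj, if_false, BTree.size]
      omega

lemma brestrict_eval {ι : Type} [DecidableEq ι] (i : ι) (b : Bool) (B : BTree ι)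
    (y : ι → Bool) : (brestrict i b B).eval y = B.eval (Function.update y i b) := by
  induction B with
  | leaf c => rfl
  | node j t0 t1 ih0 ih1 =>
    by_cases hj : j = i
    · subst hj
      simp only [brestrict, if_true, BTree.eval, Function.update_self]
      cases b <;> simp [ih0, ih1]
    · simp only [brestrict, hj, if_false, BTree.eval, Function.update_of_ne hj]
      by_cases hy : y j <;> simp [hy, ih0, ih1]

/-! ### The two key hazard-free evaluation identities -/

lemma hfext_update_of_eq {ι : Type} [DecidableEq ι] (f : (ι → Bool) → Bool)
    (x : ι → Option Bool) (i : ι) (b : Bool) (hx : x i = some b) :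
    hfext (fun y => f (Function.update y i b)) x = hfext f x := by
  apply hfext_congr
  intro y hy
  have hyi : y i = b := hy i b hx
  rw [← hyi, Function.update_eq_self]

lemma update_mem_res {ι : Type} [DecidableEq ι] {x : ι → Option Bool} {y : ι → Bool}
    (hy : y ∈ Res x) {i : ι} (hx : x i = none) (b : Bool) :
    Function.update y i b ∈ Res x := by
  intro j c hj
  by_cases hji : j = i
  · subst hji; rw [hx] at hj; cases hj
  · rw [Function.update_of_ne hji]; exact hy j c hj

lemma hfext_none_eq_merge {ι : Type} [DecidableEq ι] (f : (ι → Bool) → Bool)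
    (x : ι → Option Bool) (i : ι) (hx : x i = none) :
    hfext f x = merge3 (hfext (fun y => f (Function.update y i false)) x)
                       (hfext (fun y => f (Function.update y i true)) x) := by
  set f0 : (ι → Bool) → Bool := fun y => f (Function.update y i false) with hf0
  set f1 : (ι → Bool) → Bool := fun y => f (Function.update y i true) with hf1
  have key : ∀ b : Bool, (∀ y ∈ Res x, f y = b) ↔
      (∀ y ∈ Res x, f0 y = b) ∧ (∀ y ∈ Res x, f1 y = b) := by
    intro b
    constructor
    · intro H
      exact ⟨fun y hy => H _ (update_mem_res hy hx false),
             fun y hy => H _ (update_mem_res hy hx true)⟩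
    · rintro ⟨H0, H1⟩ y hy
      cases hyi : y i
      · have h' : f (Function.update y i false) = b := H0 y hy
        rwa [← hyi, Function.update_eq_self] at h'
      · have h' : f (Function.update y i true) = b := H1 y hy
        rwa [← hyi, Function.update_eq_self] at h' 
  cases hval : hfext f x with
  | some b =>
    cases b
    · obtain ⟨H0, H1⟩ := (key false).mp ((hfext_eq_false_iff f x).mp hval)
      rw [(hfext_eq_false_iff f0 x).mpr H0, (hfext_eq_false_iff f1 x).mpr H1]
      rfl
    · obtain ⟨H0, H1⟩ := (key true).mp ((hfext_eq_true_iff f x).mp hval)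
      rw [(hfext_eq_true_iff f0 x).mpr H0, (hfext_eq_true_iff f1 x).mpr H1]
      rfl
  | none =>
    obtain ⟨hnt, hnf⟩ := (hfext_eq_none_iff f x).mp hval
    cases h0 : hfext f0 x with
    | none => simp [merge3]
    | some c0 =>
      cases h1 : hfext f1 x with
      | none => simp [merge3]
      | some c1 =>
        by_cases hc : c0 = c1
        · subst hc
          exfalso
          cases c0
          · exact hnf ((key false).mpr ⟨(hfext_eq_false_iff f0 x).mp h0,
              (hfext_eq_false_iff f1 x).mp h1⟩)
          · exact hnt ((key true).mpr ⟨(hfext_eq_true_iff f0 x).mp h0,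
              (hfext_eq_true_iff f1 x).mp h1⟩)
        · simp [merge3, hc]


/-! ### Upper bound construction -/

lemma exists_ttree {ι : Type} [DecidableEq ι] :
    ∀ (s : ℕ) (B : BTree ι), B.size ≤ s →
      ∃ T : TTree ι, (∀ x, T.eval x = hfext B.eval x) ∧ T.size + 1 ≤ 2 ^ B.size := by
  intro s
  induction s with
  | zero => intro B hB; exact absurd (le_trans (btree_size_pos B) hB) (by omega)
  | succ s ih =>
    intro B hB
    cases B with
    | leaf b =>
      refine ⟨.leaf (some b), fun x => ?_, by simp [TTree.size, BTree.size]⟩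
      cases b
      · exact ((hfext_eq_false_iff _ x).mpr (fun y _ => rfl)).symm
      · exact ((hfext_eq_true_iff _ x).mpr (fun y _ => rfl)).symm
    | node i B0 B1 =>
      have hs : B0.size + B1.size ≤ s + 1 := hB
      have hp0 := btree_size_pos B0
      have hp1 := btree_size_pos B1
      have h0 : (brestrict i false B0).size ≤ s :=
        le_trans (brestrict_size i false B0) (by omega)
      have h1 : (brestrict i true B1).size ≤ s :=
        le_trans (brestrict_size i true B1) (by omega)
      obtain ⟨T0, hT0e, hT0s⟩ := ih (brestrict i false B0) h0
      obtain ⟨T1, hT1e, hT1s⟩ := ih (brestrict i true B1) h1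
      set f : (ι → Bool) → Bool := (BTree.node i B0 B1).eval with hf
      have e0 : (brestrict i false B0).eval = fun y => f (Function.update y i false) := by
        funext y
        rw [brestrict_eval]
        show B0.eval (Function.update y i false)
          = BTree.eval (.node i B0 B1) (Function.update y i false)
        simp [BTree.eval, Function.update_self]
      have e1 : (brestrict i true B1).eval = fun y => f (Function.update y i true) := by
        funext y
        rw [brestrict_eval]
        show B1.eval (Function.update y i true)
          = BTree.eval (.node i B0 B1) (Function.update y i true)
        simp [BTree.eval, Function.update_self]
      rw [e0] at hT0e
      rw [e1] at hT1e
      refine ⟨.node i T0 (tprod T0 T1) T1, fun x => ?_, ?_⟩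
      · show (match x i with
          | some false => T0.eval x
          | none => (tprod T0 T1).eval x
          | some true => T1.eval x) = hfext f x
        cases hxi : x i with
        | none =>
          simp only
          rw [tprod_eval, hT0e, hT1e, hfext_none_eq_merge f x i hxi]
        | some v =>
          cases v
          · simp only
            rw [hT0e, hfext_update_of_eq f x i false hxi]
          · simp only
            rw [hT1e, hfext_update_of_eq f x i true hxi]
      · have hsize : (TTree.node i T0 (tprod T0 T1) T1).size
            = T0.size + T0.size * T1.size + T1.size := by
          simp [TTree.size, tprod_size]
        rw [hsize]
        have hb0 : T0.size + 1 ≤ 2 ^ B0.size :=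
          le_trans hT0s (Nat.pow_le_pow_right (by norm_num) (brestrict_size i false B0))
        have hb1 : T1.size + 1 ≤ 2 ^ B1.size :=
          le_trans hT1s (Nat.pow_le_pow_right (by norm_num) (brestrict_size i true B1))
        have : (T0.size + 1) * (T1.size + 1) ≤ 2 ^ B0.size * 2 ^ B1.size :=
          Nat.mul_le_mul hb0 hb1
        calc T0.size + T0.size * T1.size + T1.size + 1
            = (T0.size + 1) * (T1.size + 1) := by ring
          _ ≤ 2 ^ B0.size * 2 ^ B1.size := this
          _ = 2 ^ (BTree.node i B0 B1).size := by
              rw [← pow_add]; rfl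

/-! ### Existence of a Boolean decision tree computing any `f` -/

lemma exists_btree {ι : Type} [Fintype ι] [DecidableEq ι] (f : (ι → Bool) → Bool) :
    ∃ B : BTree ι, ∀ x, B.eval x = f x := by
  suffices h : ∀ s : Finset ι, ∀ f : (ι → Bool) → Bool,
      (∀ y y' : ι → Bool, (∀ i ∈ s, y i = y' i) → f y = f y') →
      ∃ B : BTree ι, ∀ x, B.eval x = f x by
    refine h Finset.univ f fun y y' hyy => ?_
    have : y = y' := funext fun i => hyy i (Finset.mem_univ i)
    rw [this]
  intro s
  induction s using Finset.induction_on with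
  | empty =>
    intro f hf
    exact ⟨.leaf (f fun _ => false), fun x => hf _ x (fun i hi => absurd hi (by simp))⟩
  | @insert i s hi ihs =>
    intro f hf
    have dep : ∀ b : Bool, ∀ y y' : ι → Bool, (∀ j ∈ s, y j = y' j) →
        f (Function.update y i b) = f (Function.update y' i b) := by
      intro b y y' hyy
      apply hf
      intro j hj
      rcases Finset.mem_insert.mp hj with rfl | hjs
      · simp [Function.update_self]
      · have hji : j ≠ i := fun h => hi (h ▸ hjs)
        rw [Function.update_of_ne hji, Function.update_of_ne hji]
        exact hyy j hjs
    obtain ⟨B0, hB0⟩ := ihs (fun y => f (Function.update y i false)) (dep false)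
    obtain ⟨B1, hB1⟩ := ihs (fun y => f (Function.update y i true)) (dep true)
    refine ⟨.node i B0 B1, fun x => ?_⟩
    show (if x i then B1.eval x else B0.eval x) = f x
    cases hxi : x i
    · rw [if_neg (by simp), hB0]
      rw [← hxi, Function.update_eq_self]
    · rw [if_pos rfl, hB1]
      rw [← hxi, Function.update_eq_self]

end Stmt16Aux


/-- `2·size(f) − 1 ≤ size_u(f) ≤ 2^{size(f)} − 1`. -/
theorem stmt16 {n : ℕ} (f : (Fin n → Bool) → Bool) :
    2 * sizeBool f - 1 ≤ sizeU f ∧ sizeU f ≤ 2 ^ sizeBool f - 1 := by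
  classical
  obtain ⟨B₀, hB₀⟩ := Stmt16Aux.exists_btree f
  have hSBne : {s | ∃ B : BTree (Fin n), (∀ x, B.eval x = f x) ∧ B.size = s}.Nonempty :=
    ⟨B₀.size, B₀, hB₀, rfl⟩
  obtain ⟨B, hBe, hBs⟩ : ∃ B : BTree (Fin n), (∀ x, B.eval x = f x) ∧ B.size = sizeBool f :=
    Nat.sInf_mem hSBne
  have hfe : B.eval = f := funext hBe
  obtain ⟨T, hTe, hTs⟩ := Stmt16Aux.exists_ttree (ι := Fin n) B.size B le_rfl
  rw [hfe] at hTe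
  rw [hBs] at hTs
  have hTmem : T.size ∈ {s | ∃ T' : TTree (Fin n), (∀ x, T'.eval x = hfext f x) ∧ T'.size = s} :=
    ⟨T, hTe, rfl⟩
  have hup : sizeU f ≤ T.size := Nat.sInf_le hTmem
  obtain ⟨T', hT'e, hT's⟩ :
      ∃ T' : TTree (Fin n), (∀ x, T'.eval x = hfext f x) ∧ T'.size = sizeU f :=
    Nat.sInf_mem ⟨T.size, hTmem⟩
  have hprune : ∀ x, (Stmt16Aux.prune T').eval x = f x := by
    intro x
    apply Stmt16Aux.prune_eval
    rw [hT'e, Stmt16Aux.hfext_bool]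
  have hlow : sizeBool f ≤ (Stmt16Aux.prune T').size :=
    Nat.sInf_le ⟨Stmt16Aux.prune T', hprune, rfl⟩
  have hps := Stmt16Aux.prune_size T'
  constructor <;> omega
end

section
/- Let s ≥ 0 and let f, g : {0,1}^n → {0,1} be Boolean functions with s_u(f) ≤ s and s_u(g) ≤ s. If there exists z ∈ {0,u,1}^n such that f̃(y) = g̃(y) for every y ∈ {0,u,1}^n with Hamming distance at most 4s from z, then f̃(y) = g̃(y) for all y ∈ {0,u,1}^n (equivalently, f = g). -/
attribute [local instance 0] Classical.propDecidable

lemma hfext_some {ι : Type} (f : (ι → Bool) → Bool) (x : ι → Bool) :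
    hfext f (fun i => some (x i)) = some (f x) := by
  have hres : ∀ y, y ∈ Res (fun i => some (x i)) → y = x := by
    intro y hy; funext i; exact hy i (x i) rfl
  have hx : x ∈ Res (fun i => some (x i)) := by
    intro i b h; exact Option.some_injective _ h
  cases hfx : f x with
  | true =>
    have : ∀ y ∈ Res (fun i => some (x i)), f y = true := by
      intro y hy; rw [hres y hy, hfx]
    rw [hfext, if_pos this]
  | false =>
    have h1 : ¬ ∀ y ∈ Res (fun i => some (x i)), f y = true := by
      intro h; have := h x hx; rw [hfx] at this; exact Bool.false_ne_true this
    have h2 : ∀ y ∈ Res (fun i => some (x i)), f y = false := by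
      intro y hy; rw [hres y hy, hfx]
    rw [hfext, if_neg h1, if_pos h2]

/-- A hazard-free extension of a function with u-sensitivity at most `s` is
determined by its values on any Hamming ball of radius `4s` in `{0,u,1}^n`. -/
theorem stmt18 {n : ℕ} (s : ℕ) (f g : (Fin n → Bool) → Bool)
    (hfs : sensU f ≤ s) (hgs : sensU g ≤ s)
    (z : Fin n → Option Bool)
    (hball : ∀ y : Fin n → Option Bool,
        hammingDist z y ≤ 4*s → hfext f y = hfext g y) :
    (∀ y : Fin n → Option Bool, hfext f y = hfext g y) ∧ f = g := by
  have hsf : ∀ y, sensAt f y ≤ s := fun y =>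
    le_trans (Finset.le_sup (Finset.mem_univ y)) hfs
  have hsg : ∀ y, sensAt g y ≤ s := fun y =>
    le_trans (Finset.le_sup (Finset.mem_univ y)) hgs
  have key : ∀ d, ∀ y : Fin n → Option Bool,
      hammingDist z y ≤ d → hfext f y = hfext g y := by
    intro d
    induction d with
    | zero => intro y h; exact hball y (le_trans h (Nat.zero_le _))
    | succ m ih =>
      intro y hy
      by_cases hle : hammingDist z y ≤ m
      · exact ih y hle
      by_cases hb : hammingDist z y ≤ 4*s
      · exact hball y hb
      push_neg at hle hb
      by_contra hne
      have main : ∀ i : Fin n, z i ≠ y i →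
          (∃ y' : Fin n → Option Bool,
            y' i ≠ y i ∧ (∀ j, j ≠ i → y' j = y j) ∧ hfext f y' ≠ hfext f y) ∨
          (∃ y' : Fin n → Option Bool,
            y' i ≠ y i ∧ (∀ j, j ≠ i → y' j = y j) ∧ hfext g y' ≠ hfext g y) := by
        intro i hzi
        set y' : Fin n → Option Bool := Function.update y i (z i) with hy'
        have hy'i : y' i = z i := Function.update_self i (z i) y
        have hy'j : ∀ j, j ≠ i → y' j = y j := fun j hj =>
          Function.update_of_ne hj (z i) y
        have hset : (Finset.univ.filter fun j => z j ≠ y' j) =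
            (Finset.univ.filter fun j => z j ≠ y j) \ {i} := by
          ext j
          by_cases hj : j = i
          · subst hj; simp [hy'i]
          · simp [hy'j j hj, hj]
        have hdist : hammingDist z y' ≤ m := by
          have hcard : hammingDist z y' = hammingDist z y - 1 := by
            show (Finset.univ.filter fun j => z j ≠ y' j).card = _
            rw [hset]
            rw [Finset.card_sdiff_of_subset (by simpa using hzi)]
            simp [hammingDist]
          omega
        have hfg' : hfext f y' = hfext g y' := ih y' hdist
        have hney : y' i ≠ y i := by rw [hy'i]; exact hzi
        by_cases hfy : hfext f y' = hfext f y
        · right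
          have heq : hfext g y' = hfext f y := by rw [← hfg', hfy]
          exact ⟨y', hney, hy'j, fun h => hne (heq.symm.trans h)⟩
        · left
          exact ⟨y', hney, hy'j, hfy⟩
      have h1 : hammingDist z y ≤ sensAt f y + sensAt g y := by
        unfold hammingDist sensAt
        refine le_trans (Finset.card_le_card ?_) (Finset.card_union_le _ _)
        intro i hi
        simp only [Finset.mem_filter, Finset.mem_union, Finset.mem_univ,
          true_and] at hi ⊢
        exact main i hi
      have h2 := hsf y
      have h3 := hsg y
      omega
  refine ⟨fun y => key (hammingDist z y) y le_rfl, ?_⟩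
  funext x
  have := key (hammingDist z (fun i => some (x i))) (fun i => some (x i)) le_rfl
  rw [hfext_some, hfext_some] at this
  exact Option.some_injective _ this
end

section
/- Let f : {0,1}^n → {0,1} with s_u(f) ≤ s, let x ∈ {0,u,1}^n, and let S be a set of strings each differing from x in exactly one coordinate with |S| ≥ 4s + 1. Then the value f̃(x) occurs strictly more often in the multiset {f̃(y) : y ∈ S} than each of the other two values of {0,u,1}; in particular f̃(x) is the unique plurality value of f̃ on S. -/
attribute [local instance 0] Classical.propDecidable

/-- If `s_u(f) ≤ s` and `S` is a set of at least `4s+1` strings each differing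
from `x` in exactly one coordinate, then `f̃(x)` occurs strictly more often among
`{f̃(y) : y ∈ S}` than each of the other two values; in particular `f̃(x)` is the
unique plurality value of `f̃` on `S`. -/
theorem stmt19 {n : ℕ} (s : ℕ) (f : (Fin n → Bool) → Bool) (hs : sensU f ≤ s)
    (x : Fin n → Option Bool) (S : Finset (Fin n → Option Bool))
    (hS1 : ∀ y ∈ S, hammingDist x y = 1) (hScard : 4*s + 1 ≤ S.card) :
    ∀ v : Option Bool, v ≠ hfext f x →
      (S.filter fun y => hfext f y = v).card <
        (S.filter fun y => hfext f y = hfext f x).card := by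

  intro v hv
  set hx := hfext f x with hhx
  set D := S.filter (fun y => hfext f y ≠ hx) with hD
  set I := Finset.univ.filter (fun i : Fin n => ∃ y : Fin n → Option Bool,
      y i ≠ x i ∧ (∀ j, j ≠ i → y j = x j) ∧ hfext f y ≠ hfext f x) with hI
  have hIs : I.card ≤ s := by
    have h1 : sensAt f x ≤ sensU f :=
      Finset.le_sup (f := fun x => sensAt f x) (Finset.mem_univ x)
    have h2 : I.card ≤ sensAt f x := by
      rw [sensAt]
      apply Finset.card_le_card
      intro i hi
      rw [hI] at hi
      simp only [Finset.mem_filter] at hi ⊢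
      exact hi
    exact le_trans h2 (le_trans h1 hs)
  have hDcard : D.card ≤ 2 * s := by
    have hsub : D ⊆ (I.sigma fun i => (Finset.univ : Finset (Option Bool)).erase (x i)).image
        (fun p : Σ _ : Fin n, Option Bool => Function.update x p.1 p.2) := by
      intro y hy
      rw [hD, Finset.mem_filter] at hy
      obtain ⟨hyS, hyne⟩ := hy
      have h1 := hS1 y hyS
      unfold hammingDist at h1
      obtain ⟨i, hi⟩ := Finset.card_eq_one.mp h1
      have hmem : ∀ j, x j ≠ y j ↔ j = i := by
        intro j
        constructor
        · intro hj
          have : j ∈ Finset.univ.filter (fun j => x j ≠ y j) := by simp [hj]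
          rw [hi] at this; simpa using this
        · intro hj
          have : j ∈ ({i} : Finset (Fin n)) := by rw [hj]; exact Finset.mem_singleton_self i
          rw [← hi] at this; simpa using this
      have hyi : y i ≠ x i := fun h => (hmem i).mpr rfl h.symm
      have hyj : ∀ j, j ≠ i → y j = x j := by
        intro j hj
        by_contra hne
        exact hj ((hmem j).mp (fun h => hne h.symm))
      refine Finset.mem_image.mpr ⟨⟨i, y i⟩, ?_, ?_⟩
      · rw [Finset.mem_sigma]
        constructor
        · rw [hI, Finset.mem_filter]
          exact ⟨Finset.mem_univ i, y, hyi, hyj, hyne⟩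
        · exact Finset.mem_erase.mpr ⟨hyi, Finset.mem_univ _⟩
      · funext j
        by_cases hji : j = i
        · subst hji; simp [Function.update]
        · simp [Function.update, hji, hyj j hji]
    calc D.card ≤ _ := Finset.card_le_card hsub
      _ ≤ (I.sigma fun i => (Finset.univ : Finset (Option Bool)).erase (x i)).card :=
          Finset.card_image_le
      _ = ∑ i ∈ I, ((Finset.univ : Finset (Option Bool)).erase (x i)).card :=
          Finset.card_sigma _ _
      _ = ∑ _i ∈ I, 2 := by
          apply Finset.sum_congr rfl
          intro i _
          rw [Finset.card_erase_of_mem (Finset.mem_univ _)]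
          simp
      _ = 2 * I.card := by rw [Finset.sum_const, smul_eq_mul, mul_comm]
      _ ≤ 2 * s := by omega
  have hvsub : (S.filter fun y => hfext f y = v) ⊆ D := by
    intro y hy
    rw [Finset.mem_filter] at hy
    rw [hD, Finset.mem_filter]
    exact ⟨hy.1, by rw [hy.2]; exact hv⟩
  have hv2 : (S.filter fun y => hfext f y = v).card ≤ 2 * s :=
    le_trans (Finset.card_le_card hvsub) hDcard
  have hsplit : (S.filter fun y => hfext f y = hx).card + D.card = S.card := by
    rw [hD]
    exact Finset.card_filter_add_card_filter_not (fun y => hfext f y = hx)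
  omega
end
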